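/- arXiv:1204.1585 — 13 statements merged into one kernel-verified Lean document; each statement's English description precedes it below -/
import Mathlib

section
/- Desargues' theorem (direct part). Let ABC and A₁B₁C₁ be nondegenerate triangles in the Euclidean plane with A ≠ A₁, B ≠ B₁, C ≠ C₁, and suppose the lines AA₁, BB₁, CC₁ all pass through a common point O with O ∉ {A, B, C, A₁, B₁, C₁}. Assume the corresponding side lines are distinct: line AB ≠ line A₁B₁, line BC ≠ line B₁C₁, line CA ≠ line C₁A₁. If N is a point lying on both line AB and line A₁B₁, M is a point lying on both line BC and line B₁C₁, and P is a point lying on both line CA and line C₁A₁, then M, N, P are collinear. -/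
noncomputable section

open AffineMap

namespace DesarguesAux

abbrev E := EuclideanSpace ℝ (Fin 2)

/-- Extract a parameter from membership in a line through two points. -/
lemma param_of_mem {X Y Z : E} (h : Z ∈ affineSpan ℝ ({X, Y} : Set E)) :
    ∃ t : ℝ, Z - X = t • (Y - X) := by
  have h' : (Z - X) +ᵥ X ∈ affineSpan ℝ ({X, Y} : Set E) := by
    simpa [vadd_eq_add, sub_add_cancel] using h
  rw [vadd_left_mem_affineSpan_pair] at h'
  obtain ⟨r, hr⟩ := h'
  exact ⟨r, by rw [← hr]; simp [vsub_eq_sub]⟩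

/-- Membership in a line through two points from a parameter. -/
lemma mem_of_param {X Y Z : E} (t : ℝ) (h : Z - X = t • (Y - X)) :
    Z ∈ affineSpan ℝ ({X, Y} : Set E) := by
  have : Z = t • (Y -ᵥ X) +ᵥ X := by
    simp only [vsub_eq_sub, vadd_eq_add]
    have : Z = (Z - X) + X := by abel
    rw [this, h]
  rw [this]
  exact smul_vsub_vadd_mem_affineSpan_pair _ _ _

/-- Ratio along a cevian: A₁ - O = a • (A - O) with a ∉ {0, 1}. -/
lemma exists_ratio {O X X₁ : E} (h : O ∈ affineSpan ℝ ({X, X₁} : Set E))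
    (h1 : O ≠ X) (h2 : O ≠ X₁) :
    ∃ a : ℝ, a ≠ 0 ∧ a ≠ 1 ∧ X₁ - O = a • (X - O) := by
  obtain ⟨r, hr⟩ := param_of_mem h
  have hr0 : r ≠ 0 := by
    intro h0
    apply h1
    rw [h0, zero_smul, sub_eq_zero] at hr
    exact hr
  have hr1 : r ≠ 1 := by
    intro h0
    apply h2
    rw [h0, one_smul] at hr
    have : O - X₁ = 0 := by linear_combination (norm := module) hr
    rw [sub_eq_zero] at this; exact this
  refine ⟨(r - 1) / r, ?_, ?_, ?_⟩
  · exact div_ne_zero (sub_ne_zero.mpr hr1) hr0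
  · intro h0
    rw [div_eq_one_iff_eq hr0] at h0
    simpa using h0
  · have : X - O = (-r) • (X₁ - X) := by
      linear_combination (norm := module) (-1 : ℝ) • hr
    rw [this, smul_smul]
    have hx : X₁ - O = (1 - r) • (X₁ - X) := by
      linear_combination (norm := module) (-1 : ℝ) • hr
    rw [hx]
    congr 1
    field_simp
    ring

/-- If the corresponding side lines are distinct, the vectors from O to the
two vertices are linearly independent. -/
lemma indep {O X Y X₁ Y₁ : E} {a b : ℝ}
    (hX₁ : X₁ - O = a • (X - O)) (hY₁ : Y₁ - O = b • (Y - O))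
    (hOX : O ≠ X) (hXY : X ≠ Y) (hXY₁ : X₁ ≠ Y₁)
    (hl : affineSpan ℝ ({X, Y} : Set E) ≠ affineSpan ℝ ({X₁, Y₁} : Set E)) :
    ∀ p q : ℝ, p • (X - O) + q • (Y - O) = 0 → p = 0 ∧ q = 0 := by
  intro p q hpq
  by_cases hq : q = 0
  · subst hq
    refine ⟨?_, rfl⟩
    rw [zero_smul, add_zero] at hpq
    by_contra hp
    apply hOX
    have : X - O = 0 := by
      have := smul_eq_zero.mp hpq
      tauto
    rw [sub_eq_zero] at this; exact this.symm
  · exfalso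
    -- Y - O = k • (X - O), all of X, Y, X₁, Y₁ on one line through O
    set e : E := X - O with he
    have he0 : e ≠ 0 := fun h => hOX (sub_eq_zero.mp h).symm
    have hk : Y - O = (-(p/q)) • e := by
      rw [he]
      have : q • (Y - O) = (-p) • (X - O) := by
        linear_combination (norm := module) hpq
      have h2 : Y - O = (q⁻¹ * (-p)) • (X - O) := by
        rw [mul_smul, ← this, inv_smul_smul₀ hq]
      rw [h2]; congr 1; field_simp
    set k : ℝ := -(p/q) with hkdef
    -- coordinates: X ↦ 1, Y ↦ k, X₁ ↦ a, Y₁ ↦ b*k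
    have cX : X - O = (1:ℝ) • e := by rw [one_smul]
    have cY : Y - O = k • e := hk
    have cX₁ : X₁ - O = a • e := by rw [hX₁, he]
    have cY₁ : Y₁ - O = (b * k) • e := by rw [hY₁, hk, smul_smul]
    have hne1 : (1:ℝ) ≠ k := by
      intro h
      apply hXY
      have : X - Y = ((1:ℝ) - k) • e := by
        rw [sub_smul, ← cX, ← cY]; abel
      rw [← h, sub_self, zero_smul, sub_eq_zero] at this; exact this
    have hne2 : a ≠ b * k := by
      intro h
      apply hXY₁
      have : X₁ - Y₁ = (a - b * k) • e := by
        rw [sub_smul, ← cX₁, ← cY₁]; abel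
      rw [h, sub_self, zero_smul, sub_eq_zero] at this; exact this
    -- generic membership fact
    have key : ∀ (x y z : ℝ) (Px Py Pz : E), x ≠ y → Px - O = x • e → Py - O = y • e →
        Pz - O = z • e → Pz ∈ affineSpan ℝ ({Px, Py} : Set E) := by
      intro x y z Px Py Pz hxy hPx hPy hPz
      apply mem_of_param ((z - x)/(y - x))
      have h1 : Pz - Px = (z - x) • e := by
        have : Pz - Px = (Pz - O) - (Px - O) := by abel
        rw [this, hPx, hPz, sub_smul]
      have h2 : Py - Px = (y - x) • e := by
        have : Py - Px = (Py - O) - (Px - O) := by abel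
        rw [this, hPx, hPy, sub_smul]
      rw [h1, h2, smul_smul]
      congr 1
      exact (div_mul_cancel₀ _ (sub_ne_zero.mpr (Ne.symm hxy))).symm
    apply hl
    apply le_antisymm
    · rw [affineSpan_le]
      intro z hz
      simp only [Set.mem_insert_iff, Set.mem_singleton_iff] at hz
      rcases hz with h | h
      · rw [h]; exact key a (b*k) 1 X₁ Y₁ X hne2 cX₁ cY₁ cX
      · rw [h]; exact key a (b*k) k X₁ Y₁ Y hne2 cX₁ cY₁ cY
    · rw [affineSpan_le]
      intro z hz
      simp only [Set.mem_insert_iff, Set.mem_singleton_iff] at hz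
      rcases hz with h | h
      · rw [h]; exact key 1 k a X Y X₁ hne1 cX cY cX₁
      · rw [h]; exact key 1 k (b*k) X Y Y₁ hne1 cX cY cY₁

/-- The key linear identity behind Desargues' theorem. -/
lemma key_identity (u v w N M P O : E) (a b c t₂ m₂ p₂ : ℝ)
    (hN : N - O = ((1 - t₂) * a) • u + (t₂ * b) • v)
    (hM : M - O = ((1 - m₂) * b) • v + (m₂ * c) • w)
    (hP : P - O = ((1 - p₂) * c) • w + (p₂ * a) • u)
    (sN : t₂ * (b - a) = 1 - a) (sM : m₂ * (c - b) = 1 - b)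
    (sP : p₂ * (a - c) = 1 - c) :
    ((1 - c) * (b - a)) • (N - O) + ((1 - a) * (c - b)) • (M - O)
      + ((1 - b) * (a - c)) • (P - O) = 0 := by
  rw [hN, hM, hP]
  match_scalars
  · linear_combination (-(1-c)*a) * sN + ((1-b)*a) * sP
  · linear_combination ((1-c)*b) * sN + (-(1-a)*b) * sM
  · linear_combination ((1-a)*c) * sM + (-(1-b)*c) * sP

end DesarguesAux

open DesarguesAux in
/-- Desargues' theorem (direct part). -/
theorem desargues_direct
    (A B C A₁ B₁ C₁ O M N P : EuclideanSpace ℝ (Fin 2))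
    (hT : AffineIndependent ℝ ![A, B, C])
    (hT₁ : AffineIndependent ℝ ![A₁, B₁, C₁])
    (hA : A ≠ A₁) (hB : B ≠ B₁) (hC : C ≠ C₁)
    (hOA : O ∈ affineSpan ℝ {A, A₁}) (hOB : O ∈ affineSpan ℝ {B, B₁})
    (hOC : O ∈ affineSpan ℝ {C, C₁})
    (hO₁ : O ≠ A) (hO₂ : O ≠ B) (hO₃ : O ≠ C)
    (hO₄ : O ≠ A₁) (hO₅ : O ≠ B₁) (hO₆ : O ≠ C₁)
    (hlAB : affineSpan ℝ {A, B} ≠ affineSpan ℝ {A₁, B₁})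
    (hlBC : affineSpan ℝ {B, C} ≠ affineSpan ℝ {B₁, C₁})
    (hlCA : affineSpan ℝ {C, A} ≠ affineSpan ℝ {C₁, A₁})
    (hN₁ : N ∈ affineSpan ℝ {A, B}) (hN₂ : N ∈ affineSpan ℝ {A₁, B₁})
    (hM₁ : M ∈ affineSpan ℝ {B, C}) (hM₂ : M ∈ affineSpan ℝ {B₁, C₁})
    (hP₁ : P ∈ affineSpan ℝ {C, A}) (hP₂ : P ∈ affineSpan ℝ {C₁, A₁}) :
    Collinear ℝ {M, N, P} := by
  -- distinctness of triangle vertices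
  have hAB : A ≠ B := hT.injective.ne (show (0 : Fin 3) ≠ 1 by decide)
  have hBC : B ≠ C := hT.injective.ne (show (1 : Fin 3) ≠ 2 by decide)
  have hCA : C ≠ A := hT.injective.ne (show (2 : Fin 3) ≠ 0 by decide)
  have hAB₁ : A₁ ≠ B₁ := hT₁.injective.ne (show (0 : Fin 3) ≠ 1 by decide)
  have hBC₁ : B₁ ≠ C₁ := hT₁.injective.ne (show (1 : Fin 3) ≠ 2 by decide)
  have hCA₁ : C₁ ≠ A₁ := hT₁.injective.ne (show (2 : Fin 3) ≠ 0 by decide)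
  -- the ratios
  obtain ⟨a, ha0, ha1, hva⟩ := exists_ratio hOA hO₁ hO₄
  obtain ⟨b, hb0, hb1, hvb⟩ := exists_ratio hOB hO₂ hO₅
  obtain ⟨c, hc0, hc1, hvc⟩ := exists_ratio hOC hO₃ hO₆
  set u : EuclideanSpace ℝ (Fin 2) := A - O with hu
  set v : EuclideanSpace ℝ (Fin 2) := B - O with hv
  set w : EuclideanSpace ℝ (Fin 2) := C - O with hw
  -- independence of the pairs
  have huv := indep hva hvb hO₁ hAB hAB₁ hlAB
  have hvw := indep hvb hvc hO₂ hBC hBC₁ hlBC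
  have hwu := indep hvc hva hO₃ hCA hCA₁ hlCA
  -- parameters for M, N, P
  obtain ⟨t₁, ht₁⟩ := param_of_mem hN₁
  obtain ⟨t₂, ht₂⟩ := param_of_mem hN₂
  obtain ⟨m₁, hm₁⟩ := param_of_mem hM₁
  obtain ⟨m₂, hm₂⟩ := param_of_mem hM₂
  obtain ⟨p₁, hp₁⟩ := param_of_mem hP₁
  obtain ⟨p₂, hp₂⟩ := param_of_mem hP₂
  -- rewrite as combinations from O
  have hN₁' : N - O = (1 - t₁) • u + t₁ • v := by
    rw [hu, hv]; linear_combination (norm := module) ht₁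
  have hN₂' : N - O = ((1 - t₂) * a) • u + (t₂ * b) • v := by
    have : N - O = (1 - t₂) • (A₁ - O) + t₂ • (B₁ - O) := by
      linear_combination (norm := module) ht₂
    rw [this, hva, hvb, smul_smul, smul_smul, hu, hv]
  have hM₁' : M - O = (1 - m₁) • v + m₁ • w := by
    rw [hv, hw]; linear_combination (norm := module) hm₁
  have hM₂' : M - O = ((1 - m₂) * b) • v + (m₂ * c) • w := by
    have : M - O = (1 - m₂) • (B₁ - O) + m₂ • (C₁ - O) := by
      linear_combination (norm := module) hm₂
    rw [this, hvb, hvc, smul_smul, smul_smul, hv, hw]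
  have hP₁' : P - O = (1 - p₁) • w + p₁ • u := by
    rw [hw, hu]; linear_combination (norm := module) hp₁
  have hP₂' : P - O = ((1 - p₂) * c) • w + (p₂ * a) • u := by
    have : P - O = (1 - p₂) • (C₁ - O) + p₂ • (A₁ - O) := by
      linear_combination (norm := module) hp₂
    rw [this, hvc, hva, smul_smul, smul_smul, hw, hu]
  -- coefficient equations
  obtain ⟨eN1, eN2⟩ := huv ((1 - t₁) - (1 - t₂) * a) (t₁ - t₂ * b)
    (by rw [sub_smul, sub_smul]; rw [hN₁'] at hN₂'; linear_combination (norm := module) hN₂')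
  obtain ⟨eM1, eM2⟩ := hvw ((1 - m₁) - (1 - m₂) * b) (m₁ - m₂ * c)
    (by rw [sub_smul, sub_smul]; rw [hM₁'] at hM₂'; linear_combination (norm := module) hM₂')
  obtain ⟨eP1, eP2⟩ := hwu ((1 - p₁) - (1 - p₂) * c) (p₁ - p₂ * a)
    (by rw [sub_smul, sub_smul]; rw [hP₁'] at hP₂'; linear_combination (norm := module) hP₂')
  rw [sub_eq_zero] at eN1 eN2 eM1 eM2 eP1 eP2
  -- distinctness of ratios
  have hab : b ≠ a := by
    intro h; exact ha1 (by linear_combination -eN1 - eN2 - t₂ * h)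
  have hbc : c ≠ b := by
    intro h; exact hb1 (by linear_combination -eM1 - eM2 - m₂ * h)
  have hca : a ≠ c := by
    intro h; exact hc1 (by linear_combination -eP1 - eP2 - p₂ * h)
  -- solved parameters
  have sN : t₂ * (b - a) = 1 - a := by linear_combination -eN1 - eN2
  have sM : m₂ * (c - b) = 1 - b := by linear_combination -eM1 - eM2
  have sP : p₂ * (a - c) = 1 - c := by linear_combination -eP1 - eP2
  have hα0 : (1 - c) * (b - a) ≠ 0 :=
    mul_ne_zero (sub_ne_zero.mpr (Ne.symm hc1)) (sub_ne_zero.mpr hab)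
  -- the key identity
  have key := key_identity u v w N M P O a b c t₂ m₂ p₂ hN₂' hM₂' hP₂' sN sM sP
  have h1 : ((1 - c) * (b - a)) • (N - M) = (-((1 - b) * (a - c))) • (P - M) := by
    linear_combination (norm := module) key
  have h2 : N - M = ((((1 - c) * (b - a))⁻¹) * (-((1 - b) * (a - c)))) • (P - M) := by
    rw [mul_smul, ← h1, inv_smul_smul₀ hα0]
  have hmem : N ∈ affineSpan ℝ ({M, P} : Set (EuclideanSpace ℝ (Fin 2))) :=
    mem_of_param _ h2
  have hcol : Collinear ℝ ({N, M, P} : Set (EuclideanSpace ℝ (Fin 2))) :=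
    collinear_insert_of_mem_affineSpan_pair hmem
  rwa [Set.insert_comm] at hcol
end
end

section
/- Collinearity of harmonic conjugates of the feet of concurrent cevians (the tri-linear polar). Let ABC be a nondegenerate triangle, and let A₁ ∈ line BC with A₁ ∉ {B, C}, B₁ ∈ line CA with B₁ ∉ {C, A}, C₁ ∈ line AB with C₁ ∉ {A, B}, such that the lines AA₁, BB₁, CC₁ have a common point. Let M be a harmonic conjugate of A₁ with respect to (B, C), N a harmonic conjugate of B₁ with respect to (C, A), and P a harmonic conjugate of C₁ with respect to (A, B). Then M, N, P are collinear. -/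
noncomputable section

/-- Collinearity of harmonic conjugates of the feet of concurrent cevians
(the tri-linear polar). -/
theorem trilinear_polar_collinear
    (A B C A₁ B₁ C₁ M N P : EuclideanSpace ℝ (Fin 2))
    (hT : AffineIndependent ℝ ![A, B, C])
    (hA₁ : A₁ ∈ affineSpan ℝ {B, C}) (hA₁B : A₁ ≠ B) (hA₁C : A₁ ≠ C)
    (hB₁ : B₁ ∈ affineSpan ℝ {C, A}) (hB₁C : B₁ ≠ C) (hB₁A : B₁ ≠ A)
    (hC₁ : C₁ ∈ affineSpan ℝ {A, B}) (hC₁A : C₁ ≠ A) (hC₁B : C₁ ≠ B)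
    (hconc : ∃ Q, Q ∈ affineSpan ℝ {A, A₁} ∧ Q ∈ affineSpan ℝ {B, B₁} ∧
      Q ∈ affineSpan ℝ {C, C₁})
    (hM : M ∈ affineSpan ℝ {B, C}) (hMB : M ≠ B) (hMC : M ≠ C) (hMA₁ : M ≠ A₁)
    (hN : N ∈ affineSpan ℝ {C, A}) (hNC : N ≠ C) (hNA : N ≠ A) (hNB₁ : N ≠ B₁)
    (hP : P ∈ affineSpan ℝ {A, B}) (hPA : P ≠ A) (hPB : P ≠ B) (hPC₁ : P ≠ C₁)
    (hMh : ∃ k : ℝ, A₁ - B = k • (A₁ - C) ∧ M - B = (-k) • (M - C))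
    (hNh : ∃ k : ℝ, B₁ - C = k • (B₁ - A) ∧ N - C = (-k) • (N - A))
    (hPh : ∃ k : ℝ, C₁ - A = k • (C₁ - B) ∧ P - A = (-k) • (P - B)) :
    Collinear ℝ {M, N, P} := by
  obtain ⟨α, hka, hMe⟩ := hMh
  obtain ⟨β, hkb, hNe⟩ := hNh
  obtain ⟨γ, hkc, hPe⟩ := hPh
  obtain ⟨Q, hQ1', hQ2', hQ3'⟩ := hconc
  -- distinctness of vertices
  have hAB : A ≠ B := by
    have := hT.injective.ne (show (0 : Fin 3) ≠ 1 by decide)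
    simpa using this
  have hBC : B ≠ C := by
    have := hT.injective.ne (show (1 : Fin 3) ≠ 2 by decide)
    simpa using this
  have hCA : C ≠ A := by
    have := hT.injective.ne (show (2 : Fin 3) ≠ 0 by decide)
    simpa using this
  -- key: linear independence of B-A, C-A
  have key : ∀ x y : ℝ, x • (B - A) + y • (C - A) = 0 → x = 0 ∧ y = 0 := by
    intro x y hxy
    have hsum : (Finset.univ : Finset (Fin 3)).sum ![-x - y, x, y] = 0 := by
      simp [Fin.sum_univ_three]; ring
    have hcomb : ∑ e ∈ (Finset.univ : Finset (Fin 3)),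
        (![-x - y, x, y] : Fin 3 → ℝ) e • (![A, B, C] : Fin 3 → _) e = 0 := by
      simp only [Fin.sum_univ_three, Matrix.cons_val_zero, Matrix.cons_val_one,
        Matrix.head_cons, Matrix.cons_val_two, Matrix.tail_cons]
      linear_combination (norm := module) hxy
    have h := affineIndependent_iff.1 hT Finset.univ _ hsum hcomb
    refine ⟨by simpa using h 1 (by simp), by simpa using h 2 (by simp)⟩
  -- nonvanishing of scalars
  have hα1 : (1 : ℝ) - α ≠ 0 := by
    intro h
    have hα : α = 1 := by linarith
    apply hBC
    have : A₁ - B = A₁ - C := by rw [hka, hα, one_smul]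
    exact sub_right_inj.mp this
  have hβ1 : (1 : ℝ) - β ≠ 0 := by
    intro h
    have hβ : β = 1 := by linarith
    apply hCA
    have : B₁ - C = B₁ - A := by rw [hkb, hβ, one_smul]
    exact sub_right_inj.mp this
  have hγ1 : (1 : ℝ) - γ ≠ 0 := by
    intro h
    have hγ : γ = 1 := by linarith
    apply hAB
    have : C₁ - A = C₁ - B := by rw [hkc, hγ, one_smul]
    exact sub_right_inj.mp this
  have hαm : (1 : ℝ) + α ≠ 0 := by
    intro h
    have hα : -α = 1 := by linarith
    apply hBC
    have : M - B = M - C := by rw [hMe, hα, one_smul]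
    exact sub_right_inj.mp this
  have hβm : (1 : ℝ) + β ≠ 0 := by
    intro h
    have hβ : -β = 1 := by linarith
    apply hCA
    have : N - C = N - A := by rw [hNe, hβ, one_smul]
    exact sub_right_inj.mp this
  have hγm : (1 : ℝ) + γ ≠ 0 := by
    intro h
    have hγ : -γ = 1 := by linarith
    apply hAB
    have : P - A = P - B := by rw [hPe, hγ, one_smul]
    exact sub_right_inj.mp this
  -- parametrize Q on each cevian
  obtain ⟨t₁, ht1⟩ : ∃ r : ℝ, r • (A₁ - A) = Q - A := by
    have h : (Q - A) +ᵥ A ∈ line[ℝ, A, A₁] := by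
      simpa [vadd_eq_add, sub_add_cancel] using hQ1'
    rw [vadd_left_mem_affineSpan_pair] at h
    simpa [vsub_eq_sub] using h
  obtain ⟨t₂, ht2⟩ : ∃ r : ℝ, r • (B₁ - B) = Q - B := by
    have h : (Q - B) +ᵥ B ∈ line[ℝ, B, B₁] := by
      simpa [vadd_eq_add, sub_add_cancel] using hQ2'
    rw [vadd_left_mem_affineSpan_pair] at h
    simpa [vsub_eq_sub] using h
  obtain ⟨t₃, ht3⟩ : ∃ r : ℝ, r • (C₁ - C) = Q - C := by
    have h : (Q - C) +ᵥ C ∈ line[ℝ, C, C₁] := by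
      simpa [vadd_eq_add, sub_add_cancel] using hQ3'
    rw [vadd_left_mem_affineSpan_pair] at h
    simpa [vsub_eq_sub] using h
  -- vector forms
  have V1 : (1 - α) • (Q - A) = t₁ • ((B - A) - α • (C - A)) := by
    rw [← ht1]
    linear_combination (norm := module) (t₁ : ℝ) • hka
  have V2 : (1 - β) • (Q - A) = ((1 - β) * (1 - t₂)) • (B - A) + t₂ • (C - A) := by
    have hQA : Q - A = t₂ • (B₁ - B) + (B - A) := by
      rw [ht2]; module
    rw [hQA]
    linear_combination (norm := module) (t₂ : ℝ) • hkb
  have V3 : (1 - γ) • (Q - A) = (-(t₃ * γ)) • (B - A) + ((1 - γ) * (1 - t₃)) • (C - A) := by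
    have hQA : Q - A = t₃ • (C₁ - C) + (C - A) := by
      rw [ht3]; module
    rw [hQA]
    linear_combination (norm := module) (t₃ : ℝ) • hkc
  -- scalar equations
  have w12 : ((1 - β) * t₁ - (1 - α) * ((1 - β) * (1 - t₂))) • (B - A)
      + (-((1 - β) * t₁ * α) - (1 - α) * t₂) • (C - A) = 0 := by
    linear_combination (norm := module) ((1 - α) : ℝ) • V2 - ((1 - β) : ℝ) • V1
  obtain ⟨e1, e2⟩ := key _ _ w12
  have w13 : ((1 - γ) * t₁ + (1 - α) * (t₃ * γ)) • (B - A)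
      + (-((1 - γ) * t₁ * α) - (1 - α) * ((1 - γ) * (1 - t₃))) • (C - A) = 0 := by
    linear_combination (norm := module) ((1 - α) : ℝ) • V3 - ((1 - γ) : ℝ) • V1
  obtain ⟨e3, e4⟩ := key _ _ w13
  have f1 : t₁ = (1 - α) * (1 - t₂) := by
    have h : (1 - β) * (t₁ - (1 - α) * (1 - t₂)) = 0 := by linear_combination e1
    rcases mul_eq_zero.1 h with h' | h'
    · exact absurd h' hβ1
    · linarith
  have f4 : t₁ * α = -((1 - α) * (1 - t₃)) := by
    have h : (1 - γ) * (t₁ * α + (1 - α) * (1 - t₃)) = 0 := by linear_combination -e4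
    rcases mul_eq_zero.1 h with h' | h'
    · exact absurd h' hγ1
    · linarith
  have E12 : t₁ * (1 - α + α * β) = 1 - α := by linear_combination f1 + e2
  have E34 : t₁ * (1 - γ + α * γ) = -((1 - α) * γ) := by linear_combination e3 + γ * f4
  have ht₁0 : t₁ ≠ 0 := by
    intro h
    rw [h] at E12
    simp at E12
    exact hα1 (by linarith)
  have hprod : α * β * γ = -1 := by
    have h : t₁ * (1 + α * β * γ) = 0 := by linear_combination γ * E12 + E34
    rcases mul_eq_zero.1 h with h' | h'
    · exact absurd h' ht₁0
    · linarith
  -- harmonic conjugate points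
  have h1 : (1 + α) • M = B + α • C := by
    linear_combination (norm := module) hMe
  have h2 : (1 + β) • N = C + β • A := by
    linear_combination (norm := module) hNe
  have h3 : (1 + γ) • P = A + γ • B := by
    linear_combination (norm := module) hPe
  have hprodv : (α * β * γ) • (B - A) = (-1 : ℝ) • (B - A) := by rw [hprod]
  have hkey : ((1 + γ) * (1 + α)) • (M - P) = ((1 + γ) * α * (1 + β)) • (N - P) := by
    linear_combination (norm := module) ((1 + γ) : ℝ) • h1 - ((1 + γ) * α : ℝ) • h2
      + ((α * β - 1) : ℝ) • h3 + hprodv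
  -- conclude collinearity
  rw [collinear_iff_exists_forall_eq_smul_vadd]
  refine ⟨P, N - P, ?_⟩
  intro p hp
  simp only [Set.mem_insert_iff, Set.mem_singleton_iff] at hp
  rcases hp with rfl | rfl | rfl
  · refine ⟨((1 + γ) * α * (1 + β)) / ((1 + γ) * (1 + α)), ?_⟩
    have hne : ((1 + γ) * (1 + α)) ≠ 0 := mul_ne_zero hγm hαm
    have hc : ((1 + γ) * (1 + α)) * (((1 + γ) * α * (1 + β)) / ((1 + γ) * (1 + α)))
        = (1 + γ) * α * (1 + β) := by field_simp
    have h5 : ((1 + γ) * (1 + α)) • p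
        = ((1 + γ) * (1 + α)) • ((((1 + γ) * α * (1 + β)) / ((1 + γ) * (1 + α))) • (N - P) + P) := by
      rw [smul_add, smul_smul, hc]
      linear_combination (norm := module) hkey
    rw [vadd_eq_add]
    exact smul_right_injective _ hne h5
  · exact ⟨1, by simp⟩
  · exact ⟨0, by simp⟩
end
end

section
/- Steiner's relation for isogonal cevians (Theorem 5). Let ABC be a nondegenerate triangle and let A₁ and A₁' be points lying strictly between B and C such that ∠BAA₁ = ∠CAA₁'. Then (dist B A₁ / dist C A₁) · (dist B A₁' / dist C A₁') = (dist A B / dist A C)². -/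
noncomputable section

open InnerProductGeometry AffineMap Real

local notation "⟪" x ", " y "⟫" => @inner ℝ _ _ x y

/-- Gram determinant identity for `u` and `u + t • (v - u)`. -/
lemma gram_aux {V : Type*} [NormedAddCommGroup V] [InnerProductSpace ℝ V]
    (u v : V) (t : ℝ) :
    ⟪u, u⟫ * ⟪u + t • (v - u), u + t • (v - u)⟫ - ⟪u, u + t • (v - u)⟫ * ⟪u, u + t • (v - u)⟫
      = t ^ 2 * (⟪u, u⟫ * ⟪v, v⟫ - ⟪u, v⟫ * ⟪u, v⟫) := by
  simp only [inner_add_left, inner_add_right, inner_sub_left, inner_sub_right,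
    real_inner_smul_left, real_inner_smul_right, real_inner_comm u v]
  ring

lemma sin_aux {V : Type*} [NormedAddCommGroup V] [InnerProductSpace ℝ V]
    (u v : V) (t : ℝ) (ht : 0 ≤ t) :
    Real.sin (angle u (u + t • (v - u))) * (‖u‖ * ‖u + t • (v - u)‖)
      = t * √(⟪u, u⟫ * ⟪v, v⟫ - ⟪u, v⟫ * ⟪u, v⟫) := by
  rw [sin_angle_mul_norm_mul_norm, gram_aux, Real.sqrt_mul (sq_nonneg t), Real.sqrt_sq ht]

/-- Steiner's relation for isogonal cevians. -/
theorem steiner_relation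
    (A B C A₁ A₁' : EuclideanSpace ℝ (Fin 2))
    (hT : AffineIndependent ℝ ![A, B, C])
    (h₁ : Sbtw ℝ B A₁ C) (h₂ : Sbtw ℝ B A₁' C)
    (hiso : EuclideanGeometry.angle B A A₁ = EuclideanGeometry.angle C A A₁') :
    (dist B A₁ / dist C A₁) * (dist B A₁' / dist C A₁') =
      (dist A B / dist A C) ^ 2 := by
  obtain ⟨t, ht, hA₁⟩ := h₁.mem_image_Ioo
  obtain ⟨s, hs, hA₂⟩ := h₂.mem_image_Ioo
  have hcol : ¬Collinear ℝ ({A, B, C} : Set _) :=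
    affineIndependent_iff_not_collinear_set.mp hT
  set u : EuclideanSpace ℝ (Fin 2) := B -ᵥ A with hu
  set v : EuclideanSpace ℝ (Fin 2) := C -ᵥ A with hv
  have hw₁ : A₁ -ᵥ A = u + t • (v - u) := by
    rw [← hA₁]; simp only [AffineMap.lineMap_apply, hu, hv, vsub_eq_sub, vadd_eq_add]; module
  have hw₂ : A₁' -ᵥ A = v + (1 - s) • (u - v) := by
    rw [← hA₂]; simp only [AffineMap.lineMap_apply, hu, hv, vsub_eq_sub, vadd_eq_add]; module
  -- positivity facts
  have hBA : B ≠ A := (ne₁₂_of_not_collinear hcol).symm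
  have hCA : C ≠ A := (ne₁₃_of_not_collinear hcol).symm
  have hun : 0 < ‖u‖ := norm_pos_iff.mpr (hu ▸ vsub_ne_zero.mpr hBA)
  have hvn : 0 < ‖v‖ := norm_pos_iff.mpr (hv ▸ vsub_ne_zero.mpr hCA)
  have hA₁A : A₁ ≠ A := by
    rintro rfl
    exact hcol (by simpa [Set.insert_comm] using h₁.wbtw.collinear)
  have hA₂A : A₁' ≠ A := by
    rintro rfl
    exact hcol (by simpa [Set.insert_comm] using h₂.wbtw.collinear)
  have hw₁n : 0 < ‖u + t • (v - u)‖ := by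
    rw [← hw₁]; exact norm_pos_iff.mpr (vsub_ne_zero.mpr hA₁A)
  have hw₂n : 0 < ‖v + (1 - s) • (u - v)‖ := by
    rw [← hw₂]; exact norm_pos_iff.mpr (vsub_ne_zero.mpr hA₂A)
  set g : ℝ := √(⟪u, u⟫ * ⟪v, v⟫ - ⟪u, v⟫ * ⟪u, v⟫) with hg
  have hgpos : 0 < g := by
    have hsinBAC : 0 < Real.sin (EuclideanGeometry.angle B A C) :=
      EuclideanGeometry.sin_pos_of_not_collinear
        (fun h => hcol (by simpa [Set.insert_comm] using h))
    have h0 : Real.sin (angle u v) * (‖u‖ * ‖v‖) = g := sin_angle_mul_norm_mul_norm u v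
    have heq : EuclideanGeometry.angle B A C = angle u v := rfl
    rw [← h0]
    exact mul_pos (heq ▸ hsinBAC) (mul_pos hun hvn)
  -- sine relations
  have hsin1 : Real.sin (angle u (u + t • (v - u))) * (‖u‖ * ‖u + t • (v - u)‖) = t * g :=
    sin_aux u v t ht.1.le
  have hsin2 : Real.sin (angle v (v + (1 - s) • (u - v))) * (‖v‖ * ‖v + (1 - s) • (u - v)‖)
      = (1 - s) * g := by
    rw [sin_aux v u (1 - s) (by linarith [hs.2])]
    congr 2
    rw [real_inner_comm u v]; ring
  have hangle1 : EuclideanGeometry.angle B A A₁ = angle u (u + t • (v - u)) := by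
    rw [EuclideanGeometry.angle, vsub_eq_sub, vsub_eq_sub, ← vsub_eq_sub, ← vsub_eq_sub, ← hu, ← hw₁]
  have hangle2 : EuclideanGeometry.angle C A A₁' = angle v (v + (1 - s) • (u - v)) := by
    rw [EuclideanGeometry.angle, vsub_eq_sub, vsub_eq_sub, ← vsub_eq_sub, ← vsub_eq_sub, ← hv, ← hw₂]
  rw [hangle1, hangle2] at hiso
  set P : ℝ := ‖u‖ * ‖u + t • (v - u)‖ with hP
  set Q : ℝ := ‖v‖ * ‖v + (1 - s) • (u - v)‖ with hQ
  have hPpos : 0 < P := mul_pos hun hw₁n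
  have hQpos : 0 < Q := mul_pos hvn hw₂n
  -- derive t * Q = (1 - s) * P
  have key1 : t * Q = (1 - s) * P := by
    have e3 : g * (t * Q) = g * ((1 - s) * P) := by
      calc g * (t * Q) = (Real.sin (angle u (u + t • (v - u))) * P) * Q := by
              rw [hsin1]; ring
        _ = (Real.sin (angle v (v + (1 - s) • (u - v))) * Q) * P := by rw [hiso]; ring
        _ = g * ((1 - s) * P) := by rw [hsin2]; ring
    exact mul_left_cancel₀ (ne_of_gt hgpos) e3
  -- cosine relation
  have hcos := congrArg Real.cos hiso
  rw [cos_angle, cos_angle, ← hP, ← hQ, div_eq_div_iff (ne_of_gt hPpos) (ne_of_gt hQpos)] at hcos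
  -- combine: (1-s) * ⟪u,w₁⟫ = t * ⟪v,w₂⟫
  have key3 : (1 - s) * ⟪u, u + t • (v - u)⟫ = t * ⟪v, v + (1 - s) • (u - v)⟫ := by
    have key3' : ((1 - s) * ⟪u, u + t • (v - u)⟫) * Q
        = (t * ⟪v, v + (1 - s) • (u - v)⟫) * Q := by
      linear_combination (1 - s) * hcos - (⟪v, v + (1 - s) • (u - v)⟫ : ℝ) * key1
    exact mul_right_cancel₀ (ne_of_gt hQpos) key3'
  -- expand inner products
  have hin1 : ⟪u, u + t • (v - u)⟫ = ⟪u, u⟫ + t * (⟪u, v⟫ - ⟪u, u⟫) := by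
    simp only [inner_add_right, inner_sub_right, real_inner_smul_right]
  have hin2 : ⟪v, v + (1 - s) • (u - v)⟫ = ⟪v, v⟫ + (1 - s) * (⟪u, v⟫ - ⟪v, v⟫) := by
    simp only [inner_add_right, inner_sub_right, real_inner_smul_right, real_inner_comm u v]
  rw [hin1, hin2] at key3
  have main : (1 - s) * (1 - t) * ⟪u, u⟫ = t * s * ⟪v, v⟫ := by linear_combination key3
  -- distances
  have hd : 0 < dist B C := dist_pos.mpr h₁.left_ne_right
  have d1 : dist B A₁ = t * dist B C := by
    rw [dist_comm, ← hA₁, dist_lineMap_left, Real.norm_eq_abs, abs_of_pos ht.1]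
  have d2 : dist C A₁ = (1 - t) * dist B C := by
    rw [dist_comm, ← hA₁, dist_lineMap_right, Real.norm_eq_abs,
      abs_of_pos (by linarith [ht.2])]
  have d3 : dist B A₁' = s * dist B C := by
    rw [dist_comm, ← hA₂, dist_lineMap_left, Real.norm_eq_abs, abs_of_pos hs.1]
  have d4 : dist C A₁' = (1 - s) * dist B C := by
    rw [dist_comm, ← hA₂, dist_lineMap_right, Real.norm_eq_abs,
      abs_of_pos (by linarith [hs.2])]
  have dAB : dist A B = ‖u‖ := by rw [dist_comm, hu, dist_eq_norm_vsub]
  have dAC : dist A C = ‖v‖ := by rw [dist_comm, hv, dist_eq_norm_vsub]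
  rw [d1, d2, d3, d4, dAB, dAC]
  have huu : ⟪u, u⟫ = ‖u‖ ^ 2 := real_inner_self_eq_norm_sq u
  have hvv : ⟪v, v⟫ = ‖v‖ ^ 2 := real_inner_self_eq_norm_sq v
  rw [huu, hvv] at main
  have h1t : (0 : ℝ) < 1 - t := by linarith [ht.2]
  have h1s : (0 : ℝ) < 1 - s := by linarith [hs.2]
  rw [mul_div_mul_right _ _ hd.ne', mul_div_mul_right _ _ hd.ne', div_mul_div_comm, div_pow,
    div_eq_div_iff (by positivity) (by positivity)]
  linear_combination -main
end
end

section
/- Carnot's theorem (1803). Let ABC be a nondegenerate triangle whose side lengths are pairwise distinct (dist A B, dist B C, dist C A pairwise unequal), and let O be its circumcenter. Suppose T_A is a point on line BC with ⟪T_A − A, O − A⟫ = 0 (so T_A lies on the tangent to the circumcircle at A), T_B is a point on line CA with ⟪T_B − B, O − B⟫ = 0, and T_C is a point on line AB with ⟪T_C − C, O − C⟫ = 0. Then T_A, T_B, T_C are collinear. -/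
/-!
For a point `X` on the circle through `A` with centre `O`, expanding `‖O - X‖ = ‖O - A‖` gives
`2 ⟪X - A, O - A⟫ = AX²`. Writing `T₁ = (1 - t) B + t C`, the tangency condition becomes
`(1 - t) AB² + t CA² = 0`, that is `(CA² - AB²) T₁ = CA² B - AB² C`: the tangent at `A` divides `BC`
externally in the ratio `AB² : CA²`. Adding the three cyclic versions of this identity, the right-hand
sides cancel, so `T₁, T₂, T₃` satisfy a linear relation whose coefficients sum to zero, which makes
them collinear.
-/

open InnerProductSpace

theorem collinear_of_smul_add_smul_add_smul_eq_zero {k V : Type*} [Field k] [AddCommGroup V]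
    [Module k V] {p₁ p₂ p₃ : V} {w₁ w₂ w₃ : k} (hw : w₁ + w₂ + w₃ = 0) (hw₁ : w₁ ≠ 0)
    (h : w₁ • p₁ + w₂ • p₂ + w₃ • p₃ = 0) : Collinear k {p₁, p₂, p₃} := by
  apply collinear_insert_of_mem_affineSpan_pair
  have hc : w₁ * ((w₁ + w₂) / w₁) = w₁ + w₂ := mul_div_cancel₀ _ hw₁
  have hp₁ : AffineMap.lineMap p₂ p₃ ((w₁ + w₂) / w₁) = p₁ := by
    apply smul_right_injective V hw₁
    rw [AffineMap.lineMap_apply_module]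
    linear_combination (norm := module) -h + hc • (p₃ - p₂) + hw • p₃
  exact hp₁ ▸ AffineMap.lineMap_mem_affineSpan_pair _ _ _

variable {V : Type*} [NormedAddCommGroup V] [InnerProductSpace ℝ V]

theorem two_mul_inner_sub_sub_eq_sq_dist {A O X : V} (h : dist O A = dist O X) :
    2 * ⟪X - A, O - A⟫_ℝ = dist X A ^ 2 := by
  rw [dist_eq_norm, dist_eq_norm] at h
  have hsq := norm_sub_sq_real (O - A) (X - A)
  rw [sub_sub_sub_cancel_right, ← h, real_inner_comm] at hsq
  rw [dist_eq_norm]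
  linarith

theorem sq_dist_sub_sq_dist_smul_eq_of_inner_eq_zero {A B C O T : V}
    (hB : dist O A = dist O B) (hC : dist O A = dist O C) (hT : T ∈ line[ℝ, B, C])
    (hTA : ⟪T - A, O - A⟫_ℝ = 0) :
    (dist C A ^ 2 - dist A B ^ 2) • T = dist C A ^ 2 • B - dist A B ^ 2 • C := by
  obtain ⟨t, rfl⟩ := mem_affineSpan_pair_iff_exists_lineMap_eq.mp hT
  rw [AffineMap.lineMap_apply_module] at hTA ⊢
  have hsplit : (1 - t) • B + t • C - A = (1 - t) • (B - A) + t • (C - A) := by module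
  rw [hsplit, inner_add_left, real_inner_smul_left, real_inner_smul_left] at hTA
  have hB' := two_mul_inner_sub_sub_eq_sq_dist hB
  have hC' := two_mul_inner_sub_sub_eq_sq_dist hC
  rw [dist_comm B A] at hB'
  have ht : (1 - t) * dist A B ^ 2 + t * dist C A ^ 2 = 0 := by
    linear_combination 2 * hTA - (1 - t) * hB' - t * hC'
  linear_combination (norm := module) ht • C - ht • B

theorem carnot_tangents_general
    (A B C O T₁ T₂ T₃ : EuclideanSpace ℝ (Fin 2))
    (h₃ : dist C A ≠ dist A B)
    (hO : dist O A = dist O B ∧ dist O B = dist O C)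
    (hT₁ : T₁ ∈ affineSpan ℝ {B, C} ∧ (inner ℝ (T₁ - A) (O - A) : ℝ) = 0)
    (hT₂ : T₂ ∈ affineSpan ℝ {C, A} ∧ (inner ℝ (T₂ - B) (O - B) : ℝ) = 0)
    (hT₃ : T₃ ∈ affineSpan ℝ {A, B} ∧ (inner ℝ (T₃ - C) (O - C) : ℝ) = 0) :
    Collinear ℝ {T₁, T₂, T₃} := by
  obtain ⟨hOAB, hOBC⟩ := hO
  have e₁ := sq_dist_sub_sq_dist_smul_eq_of_inner_eq_zero hOAB (hOAB.trans hOBC) hT₁.1 hT₁.2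
  have e₂ := sq_dist_sub_sq_dist_smul_eq_of_inner_eq_zero hOBC hOAB.symm hT₂.1 hT₂.2
  have e₃ := sq_dist_sub_sq_dist_smul_eq_of_inner_eq_zero (hOAB.trans hOBC).symm hOBC.symm
    hT₃.1 hT₃.2
  have hsum : (dist C A ^ 2 - dist A B ^ 2) • T₁ + (dist A B ^ 2 - dist B C ^ 2) • T₂
      + (dist B C ^ 2 - dist C A ^ 2) • T₃ = 0 := by
    rw [e₁, e₂, e₃]
    module
  exact collinear_of_smul_add_smul_add_smul_eq_zero (by ring)
    (sub_ne_zero.mpr fun h ↦ h₃ ((sq_eq_sq₀ dist_nonneg dist_nonneg).mp h)) hsum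

/-- Carnot's theorem (1803): the tangents to the circumcircle at the vertices
of a scalene triangle meet the opposite side lines in three collinear points. -/
theorem carnot_tangents
    (A B C O T₁ T₂ T₃ : EuclideanSpace ℝ (Fin 2))
    (hT : AffineIndependent ℝ ![A, B, C])
    (h₁ : dist A B ≠ dist B C) (h₂ : dist B C ≠ dist C A) (h₃ : dist C A ≠ dist A B)
    (hO : dist O A = dist O B ∧ dist O B = dist O C)
    (hT₁ : T₁ ∈ affineSpan ℝ {B, C} ∧ (inner ℝ (T₁ - A) (O - A) : ℝ) = 0)
    (hT₂ : T₂ ∈ affineSpan ℝ {C, A} ∧ (inner ℝ (T₂ - B) (O - B) : ℝ) = 0)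
    (hT₃ : T₃ ∈ affineSpan ℝ {A, B} ∧ (inner ℝ (T₃ - C) (O - C) : ℝ) = 0) :
    Collinear ℝ {T₁, T₂, T₃} :=
  carnot_tangents_general A B C O T₁ T₂ T₃ h₃ hO hT₁ hT₂ hT₃
end

section
/- Newton–Gauss theorem. Let A, B, C, D be points in the Euclidean plane, no three of which are collinear. Let E be a point lying on both line AB and line CD, and let F be a point lying on both line BC and line AD. Then the midpoint of A and C, the midpoint of B and D, and the midpoint of E and F are collinear (the Newton–Gauss line of the complete quadrilateral ABCDEF). -/
/-!
Write `P = lineMap A B s = lineMap C D s'` and `Q = lineMap B C t = lineMap A D t'`. Eliminating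
`D` between the two descriptions and comparing coefficients of the independent vectors `B - A`,
`C - A` gives the single relation `s * (t' - t) = 1 - t`. With it, a direct computation shows
`midpoint P Q = lineMap (midpoint A C) (midpoint B D) (s * t')`, so the third midpoint lies on
the line through the other two.
-/

open AffineMap

section

variable {K V : Type*} [Field K] [AddCommGroup V] [Module K V]

theorem linearIndependent_sub_of_not_collinear {A B C : V} (h : ¬ Collinear K {A, B, C}) :
    LinearIndependent K ![B - A, C - A] := by
  refine LinearIndependent.pair_iff.2 fun a b hab => ?_
  by_contra hne
  apply h
  rcases eq_or_ne a 0 with rfl | ha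
  · have hb : b ≠ 0 := fun hb => hne ⟨rfl, hb⟩
    have hC : C = A := by simpa [hb, sub_eq_zero] using hab
    simp [hC, collinear_pair]
  · have hB : lineMap A C (-b / a) = B := by
      rw [lineMap_apply_module']
      linear_combination (norm := skip) -a⁻¹ • hab
      match_scalars <;> field_simp <;> ring
    rw [Set.insert_comm]
    exact collinear_insert_of_mem_affineSpan_pair (hB ▸ lineMap_mem_affineSpan_pair _ _ _)

theorem mul_sub_eq_one_sub_of_lineMap_eq {A B C D : V} (h : ¬ Collinear K {A, B, C})
    {s s' t t' : K} (hP : lineMap A B s = lineMap C D s') (hQ : lineMap B C t = lineMap A D t') :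
    s * (t' - t) = 1 - t := by
  have ht' : t' ≠ 0 := by
    rintro rfl
    rw [lineMap_apply_zero] at hQ
    exact h (collinear_insert_of_mem_affineSpan_pair (hQ ▸ lineMap_mem_affineSpan_pair _ _ _))
  simp only [lineMap_apply_module'] at hP hQ
  obtain ⟨hB, hC⟩ := LinearIndependent.pair_iff.1 (linearIndependent_sub_of_not_collinear h)
    (t' * s - s' * (1 - t)) (-(t' * (1 - s')) - s' * t)
    (by linear_combination (norm := module) t' • hP - s' • hQ)
  exact mul_left_cancel₀ ht' (by linear_combination (t' - t) * hB + (1 - t) * hC)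

theorem midpoint_lineMap_eq_lineMap_midpoint [Invertible (2 : K)] {A B C D : V} {s t t' : K}
    (hQ : lineMap B C t = lineMap A D t') (hst : s * (t' - t) = 1 - t) :
    midpoint K (lineMap A B s) (lineMap B C t) =
      lineMap (midpoint K A C) (midpoint K B D) (s * t') := by
  simp only [midpoint_eq_smul_add, lineMap_apply_module'] at hQ ⊢
  linear_combination (norm := module) (⅟2 * s : K) • hQ + (⅟2 : K) • hst • (C - B)

end

theorem newton_gauss_general
    (A B C D P Q : EuclideanSpace ℝ (Fin 2))
    (h₁ : ¬ Collinear ℝ {A, B, C})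
    (hP₁ : P ∈ affineSpan ℝ {A, B}) (hP₂ : P ∈ affineSpan ℝ {C, D})
    (hQ₁ : Q ∈ affineSpan ℝ {B, C}) (hQ₂ : Q ∈ affineSpan ℝ {A, D}) :
    Collinear ℝ {midpoint ℝ A C, midpoint ℝ B D, midpoint ℝ P Q} := by
  obtain ⟨s, rfl⟩ := mem_affineSpan_pair_iff_exists_lineMap_eq.1 hP₁
  obtain ⟨s', hs'⟩ := mem_affineSpan_pair_iff_exists_lineMap_eq.1 hP₂
  obtain ⟨t, rfl⟩ := mem_affineSpan_pair_iff_exists_lineMap_eq.1 hQ₁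
  obtain ⟨t', ht'⟩ := mem_affineSpan_pair_iff_exists_lineMap_eq.1 hQ₂
  rw [midpoint_lineMap_eq_lineMap_midpoint ht'.symm
    (mul_sub_eq_one_sub_of_lineMap_eq h₁ hs'.symm ht'.symm)]
  exact collinear_triple_of_mem_affineSpan_pair (left_mem_affineSpan_pair _ _ _)
    (right_mem_affineSpan_pair _ _ _) (lineMap_mem_affineSpan_pair _ _ _)

/-- Newton–Gauss theorem: the midpoints of the three diagonals of a complete
quadrilateral are collinear. -/
theorem newton_gauss
    (A B C D P Q : EuclideanSpace ℝ (Fin 2))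
    (h₁ : ¬ Collinear ℝ {A, B, C}) (h₂ : ¬ Collinear ℝ {A, B, D})
    (h₃ : ¬ Collinear ℝ {A, C, D}) (h₄ : ¬ Collinear ℝ {B, C, D})
    (hP₁ : P ∈ affineSpan ℝ {A, B}) (hP₂ : P ∈ affineSpan ℝ {C, D})
    (hQ₁ : Q ∈ affineSpan ℝ {B, C}) (hQ₂ : Q ∈ affineSpan ℝ {A, D}) :
    Collinear ℝ {midpoint ℝ A C, midpoint ℝ B D, midpoint ℝ P Q} :=
  newton_gauss_general A B C D P Q h₁ hP₁ hP₂ hQ₁ hQ₂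
end

section
/- Neuberg's theorem on isotomic cevians. Let ABC be a nondegenerate triangle, and let P₁ ∈ line BC with P₁ ∉ {B, C}, P₂ ∈ line CA with P₂ ∉ {C, A}, P₃ ∈ line AB with P₃ ∉ {A, B}. Define the isotomic points Q₁ = B + C − P₁, Q₂ = C + A − P₂, Q₃ = A + B − P₃ (the reflections of P₁, P₂, P₃ in the midpoints of the respective sides). Suppose the lines AP₁, BP₂, CP₃ have a common point, and suppose the lines AQ₁ and BQ₂ are distinct and meet at a point X. Then X lies on line CQ₃. -/
/-!
Write `P₁ = lineMap B C t`, `P₂ = lineMap C A u`, `P₃ = lineMap A B v`. Concurrency of the cevians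
gives Ceva's relation `t u v = (1 - t) (1 - u) (1 - v)`. Reflecting in the midpoints replaces
`t, u, v` by `1 - t, 1 - u, 1 - v`, which leaves this relation invariant, so the converse of Ceva's
theorem applies to the isotomic cevians.
-/

open AffineMap

variable {k V : Type*} [Field k] [AddCommGroup V] [Module k V]

lemma add_sub_lineMap (p₀ p₁ : V) (c : k) : p₀ + p₁ - lineMap p₀ p₁ c = lineMap p₀ p₁ (1 - c) := by
  simp only [lineMap_apply_module]
  module

lemma AffineIndependent.linearIndependent_sub_sub {A B C : V}
    (hT : AffineIndependent k ![A, B, C]) : LinearIndependent k ![B - A, C - A] := by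
  refine LinearIndependent.pair_iff.2 fun s t hst => ?_
  have hw := hT.eq_zero_of_sum_eq_zero (s := Finset.univ) (w := ![-s - t, s, t])
    (by
      simp only [Fin.sum_univ_three, Matrix.cons_val_zero, Matrix.cons_val_one, Matrix.cons_val]
      ring)
    (by
      simp only [Fin.sum_univ_three, Matrix.cons_val_zero, Matrix.cons_val_one, Matrix.cons_val]
      linear_combination (norm := module) hst)
  exact ⟨hw 1 (Finset.mem_univ _), hw 2 (Finset.mem_univ _)⟩

section Ceva

variable {A B C : V} (hT : AffineIndependent k ![A, B, C]) {t u v : k}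
include hT

theorem ceva_of_mem_affineSpan (hu : u ≠ 1) {S : V}
    (h₁ : S ∈ line[k, A, lineMap B C t]) (h₂ : S ∈ line[k, B, lineMap C A u])
    (h₃ : S ∈ line[k, C, lineMap A B v]) :
    t * u * v = (1 - t) * (1 - u) * (1 - v) := by
  obtain ⟨a, rfl⟩ := mem_affineSpan_pair_iff_exists_lineMap_eq.1 h₁
  obtain ⟨b, hb⟩ := mem_affineSpan_pair_iff_exists_lineMap_eq.1 h₂
  obtain ⟨c, hc⟩ := mem_affineSpan_pair_iff_exists_lineMap_eq.1 h₃
  simp only [lineMap_apply_module] at hb hc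
  obtain ⟨hb₁, hb₂⟩ := hT.linearIndependent_sub_sub.eq_of_pair
    (s := 1 - b) (t := b * (1 - u)) (s' := a * (1 - t)) (t' := a * t)
    (by linear_combination (norm := module) hb)
  obtain ⟨hc₁, hc₂⟩ := hT.linearIndependent_sub_sub.eq_of_pair
    (s := c * v) (t := 1 - c) (s' := a * (1 - t)) (t' := a * t)
    (by linear_combination (norm := module) hc)
  have ha : a ≠ 0 := by
    rintro rfl
    exact hu (by linear_combination -hb₂ - (1 - u) * hb₁)
  refine sub_eq_zero.1 ((mul_eq_zero.1 ?_).resolve_left ha)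
  linear_combination (1 - u) * hc₁ - v * hb₂ - (1 - u) * v * hb₁ + (1 - u) * v * hc₂

theorem mem_affineSpan_of_ceva (hu : u ≠ 1) (hceva : t * u * v = (1 - t) * (1 - u) * (1 - v))
    {X : V} (h₁ : X ∈ line[k, A, lineMap B C t]) (h₂ : X ∈ line[k, B, lineMap C A u]) :
    X ∈ line[k, C, lineMap A B v] := by
  obtain ⟨p, rfl⟩ := mem_affineSpan_pair_iff_exists_lineMap_eq.1 h₁
  obtain ⟨q, hq⟩ := mem_affineSpan_pair_iff_exists_lineMap_eq.1 h₂
  simp only [lineMap_apply_module] at hq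
  obtain ⟨hq₁, hq₂⟩ := hT.linearIndependent_sub_sub.eq_of_pair
    (s := 1 - q) (t := q * (1 - u)) (s' := p * (1 - t)) (t' := p * t)
    (by linear_combination (norm := module) hq)
  have hp : p * ((1 - t) * (1 - u) + t) = 1 - u := by linear_combination -hq₂ - (1 - u) * hq₁
  have hD : (1 - t) * (1 - u) + t ≠ 0 := fun hD => hu (by linear_combination hp - p * hD)
  have key : (1 - p * t) * v = p * (1 - t) := by
    refine mul_left_cancel₀ hD ?_
    linear_combination (t - 1 - t * v) * hp + hceva
  -- `1 - p * t` matches the `C - A`-coordinate of `X`; `key` says the `B - A`-coordinates agree.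
  refine mem_affineSpan_pair_iff_exists_lineMap_eq.2 ⟨1 - p * t, ?_⟩
  simp only [lineMap_apply_module]
  linear_combination (norm := module) key • (B - A)

end Ceva

theorem neuberg_isotomic_general
    (A B C P₁ P₂ P₃ X : EuclideanSpace ℝ (Fin 2))
    (hT : AffineIndependent ℝ ![A, B, C])
    (hP₁ : P₁ ∈ affineSpan ℝ {B, C})
    (hP₂ : P₂ ∈ affineSpan ℝ {C, A}) (hP₂C : P₂ ≠ C) (hP₂A : P₂ ≠ A)
    (hP₃ : P₃ ∈ affineSpan ℝ {A, B})
    (hconc : ∃ S, S ∈ affineSpan ℝ {A, P₁} ∧ S ∈ affineSpan ℝ {B, P₂} ∧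
      S ∈ affineSpan ℝ {C, P₃})
    (hX₁ : X ∈ affineSpan ℝ {A, B + C - P₁})
    (hX₂ : X ∈ affineSpan ℝ {B, C + A - P₂}) :
    X ∈ affineSpan ℝ {C, A + B - P₃} := by
  obtain ⟨t, rfl⟩ := mem_affineSpan_pair_iff_exists_lineMap_eq.1 hP₁
  obtain ⟨u, rfl⟩ := mem_affineSpan_pair_iff_exists_lineMap_eq.1 hP₂
  obtain ⟨v, rfl⟩ := mem_affineSpan_pair_iff_exists_lineMap_eq.1 hP₃
  obtain ⟨S, hS₁, hS₂, hS₃⟩ := hconc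
  have hceva := ceva_of_mem_affineSpan hT
    (fun hu => hP₂A (by rw [hu, lineMap_apply_one])) hS₁ hS₂ hS₃
  have hu : 1 - u ≠ 1 := fun hu => hP₂C (by rw [sub_eq_self.1 hu, lineMap_apply_zero])
  rw [add_sub_lineMap] at hX₁ hX₂ ⊢
  exact mem_affineSpan_of_ceva hT hu (by linear_combination -hceva) hX₁ hX₂

/-- Neuberg's theorem: the isotomic cevians of concurrent cevians are concurrent. -/
theorem neuberg_isotomic
    (A B C P₁ P₂ P₃ X : EuclideanSpace ℝ (Fin 2))
    (hT : AffineIndependent ℝ ![A, B, C])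
    (hP₁ : P₁ ∈ affineSpan ℝ {B, C}) (hP₁B : P₁ ≠ B) (hP₁C : P₁ ≠ C)
    (hP₂ : P₂ ∈ affineSpan ℝ {C, A}) (hP₂C : P₂ ≠ C) (hP₂A : P₂ ≠ A)
    (hP₃ : P₃ ∈ affineSpan ℝ {A, B}) (hP₃A : P₃ ≠ A) (hP₃B : P₃ ≠ B)
    (hconc : ∃ S, S ∈ affineSpan ℝ {A, P₁} ∧ S ∈ affineSpan ℝ {B, P₂} ∧
      S ∈ affineSpan ℝ {C, P₃})
    (hne : affineSpan ℝ {A, B + C - P₁} ≠ affineSpan ℝ {B, C + A - P₂})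
    (hX₁ : X ∈ affineSpan ℝ {A, B + C - P₁})
    (hX₂ : X ∈ affineSpan ℝ {B, C + A - P₂}) :
    X ∈ affineSpan ℝ {C, A + B - P₃} :=
  neuberg_isotomic_general A B C P₁ P₂ P₃ X hT hP₁ hP₂ hP₂C hP₂A hP₃ hconc hX₁ hX₂
end

section
/- Isotomic transversal theorem. Let ABC be a nondegenerate triangle and let A' ∈ line BC with A' ∉ {B, C}, B' ∈ line CA with B' ∉ {C, A}, C' ∈ line AB with C' ∉ {A, B} be collinear points. Define A'' = B + C − A', B'' = C + A − B', C'' = A + B − C' (the reflections of A', B', C' in the midpoints of the respective sides). Then A'', B'', C'' are collinear. -/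
noncomputable section

/-- Isotomic transversal theorem: the isotomic points of the points of a
transversal are collinear. -/
theorem isotomic_transversal
    (A B C A' B' C' : EuclideanSpace ℝ (Fin 2))
    (hT : AffineIndependent ℝ ![A, B, C])
    (hA' : A' ∈ affineSpan ℝ {B, C}) (hA'B : A' ≠ B) (hA'C : A' ≠ C)
    (hB' : B' ∈ affineSpan ℝ {C, A}) (hB'C : B' ≠ C) (hB'A : B' ≠ A)
    (hC' : C' ∈ affineSpan ℝ {A, B}) (hC'A : C' ≠ A) (hC'B : C' ≠ B)
    (hcol : Collinear ℝ {A', B', C'}) :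
    Collinear ℝ {B + C - A', C + A - B', A + B - C'} := by
  -- parametrize the three points
  obtain ⟨a, ha⟩ : ∃ r : ℝ, r • (C -ᵥ B) = A' -ᵥ B :=
    vadd_left_mem_affineSpan_pair.mp (by rwa [vsub_vadd])
  obtain ⟨b, hb⟩ : ∃ r : ℝ, r • (A -ᵥ C) = B' -ᵥ C :=
    vadd_left_mem_affineSpan_pair.mp (by rwa [vsub_vadd])
  obtain ⟨c, hc⟩ : ∃ r : ℝ, r • (B -ᵥ A) = C' -ᵥ A :=
    vadd_left_mem_affineSpan_pair.mp (by rwa [vsub_vadd])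
  simp only [vsub_eq_sub] at ha hb hc
  have ha' : A' = B + a • (C - B) := by linear_combination (norm := module) -ha
  have hb' : B' = C + b • (A - C) := by linear_combination (norm := module) -hb
  have hc' : C' = A + c • (B - A) := by linear_combination (norm := module) -hc
  have ha0 : a ≠ 0 := by
    rintro rfl
    exact hA'B (by rw [ha', zero_smul, add_zero])
  -- linear independence of B - A and C - A
  have hnc : ¬ Collinear ℝ ({A, B, C} : Set (EuclideanSpace ℝ (Fin 2))) :=
    affineIndependent_iff_not_collinear_set.mp hT
  have hLI : ∀ x y : ℝ, x • (B - A) + y • (C - A) = 0 → x = 0 ∧ y = 0 := by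
    intro x y h
    by_contra hxy
    apply hnc
    rcases eq_or_ne y 0 with hy | hy
    · subst hy
      have hx : x ≠ 0 := by tauto
      rw [zero_smul, add_zero] at h
      have hBA : B = A := by
        have := (smul_eq_zero.mp h).resolve_left hx
        exact sub_eq_zero.mp this
      rw [hBA, Set.insert_idem]
      exact collinear_pair ℝ A C
    · have hCA : C - A = (-x / y) • (B - A) := by
        rw [div_eq_inv_mul, mul_smul]
        rw [eq_inv_smul_iff₀ hy]
        linear_combination (norm := module) h
      apply (collinear_iff_of_mem (Set.mem_insert A {B, C})).mpr
      refine ⟨B - A, fun p hp => ?_⟩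
      rcases hp with hp | hp | hp
      · exact ⟨0, by rw [hp]; simp⟩
      · exact ⟨1, by rw [hp]; simp⟩
      · exact ⟨-x / y, by rw [hp, vadd_eq_add, ← hCA]; abel⟩
  -- collinearity of A', B', C'
  obtain ⟨v₀, hv⟩ :=
    (collinear_iff_of_mem (Set.mem_insert A' {B', C'})).mp hcol
  obtain ⟨r₁, hB'v⟩ := hv B' (by simp)
  obtain ⟨r₂, hC'v⟩ := hv C' (by simp)
  simp only [vadd_eq_add] at hB'v hC'v
  have e1 : B' - A' = (a - 1) • (B - A) + (1 - a - b) • (C - A) := by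
    rw [ha', hb']; module
  have e2 : C' - A' = (c - 1 + a) • (B - A) + (-a) • (C - A) := by
    rw [ha', hc']; module
  have e3 : r₂ • (B' - A') = r₁ • (C' - A') := by
    rw [hB'v, hC'v]
    simp only [add_sub_cancel_right]
    rw [smul_comm]
  rw [e1, e2] at e3
  have hkey : (r₂ * (a - 1) - r₁ * (c - 1 + a)) • (B - A)
      + (r₂ * (1 - a - b) + r₁ * a) • (C - A) = 0 := by
    linear_combination (norm := module) e3
  obtain ⟨h1, h2⟩ := hLI _ _ hkey
  have hr2 : r₂ ≠ 0 := by
    rintro rfl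
    rw [zero_smul, zero_add] at hC'v
    rw [hC'v, sub_self] at e2
    have := (hLI _ _ e2.symm).2
    exact ha0 (by linarith)
  have hD : (a - 1) * (-a) - (1 - a - b) * (c - 1 + a) = 0 := by
    have h3 : r₂ * ((a - 1) * (-a) - (1 - a - b) * (c - 1 + a)) = 0 := by
      linear_combination (-a) * h1 - (c - 1 + a) * h2
    exact (mul_eq_zero.mp h3).resolve_left hr2
  -- the images
  have hmul : a • ((A + B - C') - (B + C - A'))
      = (c + a - 1) • ((C + A - B') - (B + C - A')) := by
    rw [ha', hb', hc']
    match_scalars <;>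
      first
        | ring1
        | linear_combination hD
        | linear_combination -hD
        | linear_combination 2 * hD
        | linear_combination -2 * hD
  have hCim : (A + B - C') - (B + C - A')
      = ((c + a - 1) / a) • ((C + A - B') - (B + C - A')) := by
    rw [div_eq_inv_mul, mul_smul, ← hmul, inv_smul_smul₀ ha0]
  apply (collinear_iff_of_mem (Set.mem_insert (B + C - A') {C + A - B', A + B - C'})).mpr
  refine ⟨(C + A - B') - (B + C - A'), fun p hp => ?_⟩
  rcases hp with hp | hp | hp
  · exact ⟨0, by rw [hp]; simp⟩
  · exact ⟨1, by rw [hp]; simp⟩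
  · exact ⟨(c + a - 1) / a, by rw [hp, vadd_eq_add, ← hCim]; abel⟩
end
end

section
/- Nagel's theorem. Let ABC be a nondegenerate triangle with a = dist B C, b = dist C A, c = dist A B and semiperimeter p = (a + b + c)/2. Let X_A be the point strictly between B and C with dist B X_A = p − c, X_B the point strictly between C and A with dist C X_B = p − a, and X_C the point strictly between A and B with dist A X_C = p − b (these are the contact points of the excircles with the sides). Then the lines A X_A, B X_B, C X_C have a common point (the Nagel point of the triangle). -/
noncomputable section

/-- Nagel's theorem: the cevians to the contact points of the excircles are
concurrent (at the Nagel point). -/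
theorem nagel_point
    (A B C X_A X_B X_C : EuclideanSpace ℝ (Fin 2))
    (hT : AffineIndependent ℝ ![A, B, C])
    (hXA : Sbtw ℝ B X_A C)
    (hXA' : dist B X_A = (dist B C + dist C A + dist A B) / 2 - dist A B)
    (hXB : Sbtw ℝ C X_B A)
    (hXB' : dist C X_B = (dist B C + dist C A + dist A B) / 2 - dist B C)
    (hXC : Sbtw ℝ A X_C B)
    (hXC' : dist A X_C = (dist B C + dist C A + dist A B) / 2 - dist C A) :
    ∃ N, N ∈ affineSpan ℝ {A, X_A} ∧ N ∈ affineSpan ℝ {B, X_B} ∧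
      N ∈ affineSpan ℝ {C, X_C} := by
  have h01 : A ≠ B := by
    have := hT.injective.ne (show (0:Fin 3) ≠ 1 by decide); simpa using this
  have h12 : B ≠ C := by
    have := hT.injective.ne (show (1:Fin 3) ≠ 2 by decide); simpa using this
  have h20 : C ≠ A := by
    have := hT.injective.ne (show (2:Fin 3) ≠ 0 by decide); simpa using this
  have ha : (0:ℝ) < dist B C := dist_pos.2 h12
  have hb : (0:ℝ) < dist C A := dist_pos.2 h20
  have hc : (0:ℝ) < dist A B := dist_pos.2 h01
  set a := dist B C with ha_def
  set b := dist C A with hb_def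
  set c := dist A B with hc_def
  have hp : (0:ℝ) < (a + b + c) / 2 := by positivity
  -- extract the parameters of the three points
  obtain ⟨tA, htA, hA⟩ := hXA.wbtw
  obtain ⟨tB, htB, hB⟩ := hXB.wbtw
  obtain ⟨tC, htC, hC⟩ := hXC.wbtw
  rw [← hA] at hXA'
  rw [← hB] at hXB'
  rw [← hC] at hXC'
  rw [dist_comm, dist_lineMap_left, Real.norm_eq_abs, abs_of_nonneg htA.1] at hXA'
  rw [dist_comm, dist_lineMap_left, Real.norm_eq_abs, abs_of_nonneg htB.1] at hXB'
  rw [dist_comm, dist_lineMap_left, Real.norm_eq_abs, abs_of_nonneg htC.1] at hXC'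
  have htAe : tA = ((a + b + c) / 2 - c) / a := by
    field_simp at hXA' ⊢; linarith [hXA']
  have htBe : tB = ((a + b + c) / 2 - a) / b := by
    field_simp at hXB' ⊢; linarith [hXB']
  have htCe : tC = ((a + b + c) / 2 - b) / c := by
    field_simp at hXC' ⊢; linarith [hXC']
  refine ⟨AffineMap.lineMap A X_A (a / ((a + b + c) / 2)),
    AffineMap.lineMap_mem_affineSpan_pair _ _ _, ?_, ?_⟩
  · have : AffineMap.lineMap A X_A (a / ((a + b + c) / 2))
        = AffineMap.lineMap B X_B (b / ((a + b + c) / 2)) := by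
      rw [← hA, ← hB, htAe, htBe]
      simp only [AffineMap.lineMap_apply_module]
      match_scalars <;> field_simp <;> ring
    rw [this]
    exact AffineMap.lineMap_mem_affineSpan_pair _ _ _
  · have : AffineMap.lineMap A X_A (a / ((a + b + c) / 2))
        = AffineMap.lineMap C X_C (c / ((a + b + c) / 2)) := by
      rw [← hA, ← hC, htAe, htCe]
      simp only [AffineMap.lineMap_apply_module]
      match_scalars <;> field_simp <;> ring
    rw [this]
    exact AffineMap.lineMap_mem_affineSpan_pair _ _ _
end
end

section
/- Rosanes' theorem (bi-homological triangles are tri-homological). Let ABC and A₁B₁C₁ be nondegenerate triangles in the Euclidean plane such that no vertex of either triangle lies on a side line of the other (A, B, C ∉ line A₁B₁ ∪ line B₁C₁ ∪ line C₁A₁ and A₁, B₁, C₁ ∉ line AB ∪ line BC ∪ line CA). Suppose the lines AA₁, BB₁, CC₁ have a common point, and the lines AB₁, BC₁, CA₁ have a common point. If the lines AC₁ and BA₁ are distinct and meet at a point R, then R lies on line CB₁ (so the lines AC₁, BA₁, CB₁ are concurrent). -/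
noncomputable section

namespace RosanesAux

lemma pt_ext {P Q : EuclideanSpace ℝ (Fin 2)} (h0 : P 0 = Q 0) (h1 : P 1 = Q 1) : P = Q := by
  ext i
  fin_cases i <;> assumption

lemma det_of_mem {P Q X : EuclideanSpace ℝ (Fin 2)} (h : X ∈ affineSpan ℝ {P, Q}) :
    (Q 0 - P 0) * (X 1 - P 1) - (Q 1 - P 1) * (X 0 - P 0) = 0 := by
  have hx : (X - P) +ᵥ P ∈ affineSpan ℝ {P, Q} := by simpa using h
  obtain ⟨t, ht⟩ := vadd_left_mem_affineSpan_pair.mp hx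
  have h0 : (t • (Q -ᵥ P)) 0 = (X - P) 0 := by rw [ht]
  have h1 : (t • (Q -ᵥ P)) 1 = (X - P) 1 := by rw [ht]
  simp only [vsub_eq_sub, PiLp.smul_apply, PiLp.sub_apply, smul_eq_mul] at h0 h1
  linear_combination (Q 1 - P 1) * h0 - (Q 0 - P 0) * h1

lemma mem_of_det {P Q X : EuclideanSpace ℝ (Fin 2)} (hPQ : P ≠ Q)
    (h : (Q 0 - P 0) * (X 1 - P 1) - (Q 1 - P 1) * (X 0 - P 0) = 0) :
    X ∈ affineSpan ℝ {P, Q} := by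
  have hne : Q 0 - P 0 ≠ 0 ∨ Q 1 - P 1 ≠ 0 := by
    by_contra hc
    push_neg at hc
    exact hPQ (pt_ext (by linarith [hc.1]) (by linarith [hc.2]))
  have key : ∃ r : ℝ, r • (Q -ᵥ P) = X - P := by
    rcases hne with hd | hd
    · refine ⟨(X 0 - P 0) / (Q 0 - P 0), pt_ext ?_ ?_⟩ <;>
        simp only [vsub_eq_sub, PiLp.smul_apply, PiLp.sub_apply, smul_eq_mul]
      · field_simp
      · field_simp
        linear_combination -h
    · refine ⟨(X 1 - P 1) / (Q 1 - P 1), pt_ext ?_ ?_⟩ <;>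
        simp only [vsub_eq_sub, PiLp.smul_apply, PiLp.sub_apply, smul_eq_mul]
      · field_simp
        linear_combination h
      · field_simp
  have := vadd_left_mem_affineSpan_pair.mpr key
  simpa using this

lemma conc_det (u0 u1 u2 v0 v1 v2 w0 w1 w2 o0 o1 : ℝ)
    (h1 : u0*o0 + u1*o1 + u2 = 0) (h2 : v0*o0 + v1*o1 + v2 = 0)
    (h3 : w0*o0 + w1*o1 + w2 = 0) :
    u0*(v1*w2 - v2*w1) - u1*(v0*w2 - v2*w0) + u2*(v0*w1 - v1*w0) = 0 := by
  linear_combination (v0*w1 - v1*w0)*h1 - (u0*w1 - u1*w0)*h2 + (u0*v1 - u1*v0)*h3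

lemma line_through (u0 u1 u2 v0 v1 v2 w0 w1 w2 r0 r1 : ℝ)
    (hdet : u0*(v1*w2 - v2*w1) - u1*(v0*w2 - v2*w0) + u2*(v0*w1 - v1*w0) = 0)
    (h7 : u0*r0 + u1*r1 + u2 = 0) (h8 : v0*r0 + v1*r1 + v2 = 0)
    (hn : u1*v2 - u2*v1 ≠ 0 ∨ u2*v0 - u0*v2 ≠ 0 ∨ u0*v1 - u1*v0 ≠ 0) :
    w0*r0 + w1*r1 + w2 = 0 := by
  rcases hn with h | h | h
  · have key : (u1*v2 - u2*v1) * (w0*r0 + w1*r1 + w2) = 0 := by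
      linear_combination r0*hdet + (v2*w1 - v1*w2)*h7 + (u1*w2 - u2*w1)*h8
    exact (mul_eq_zero.mp key).resolve_left h
  · have key : (u2*v0 - u0*v2) * (w0*r0 + w1*r1 + w2) = 0 := by
      linear_combination r1*hdet + (v0*w2 - v2*w0)*h7 + (u2*w0 - u0*w2)*h8
    exact (mul_eq_zero.mp key).resolve_left h
  · have key : (u0*v1 - u1*v0) * (w0*r0 + w1*r1 + w2) = 0 := by
      linear_combination hdet + (v1*w0 - v0*w1)*h7 + (u0*w1 - u1*w0)*h8
    exact (mul_eq_zero.mp key).resolve_left h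

lemma prop_iff (u0 u1 u2 v0 v1 v2 x0 x1 : ℝ)
    (hu : u0 ≠ 0 ∨ u1 ≠ 0) (hv : v0 ≠ 0 ∨ v1 ≠ 0)
    (e0 : u1*v2 - u2*v1 = 0) (e1 : u2*v0 - u0*v2 = 0) (e2 : u0*v1 - u1*v0 = 0) :
    u0*x0 + u1*x1 + u2 = 0 ↔ v0*x0 + v1*x1 + v2 = 0 := by
  rcases hu with hu | hu
  · have hv0 : v0 ≠ 0 := by
      intro h0
      have h1 : u0*v1 = 0 := by linear_combination e2 + u1*h0
      rcases hv with h | h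
      · exact h h0
      · exact h ((mul_eq_zero.mp h1).resolve_left hu)
    have key : u0*(v0*x0 + v1*x1 + v2) - v0*(u0*x0 + u1*x1 + u2) = 0 := by
      linear_combination x1*e2 - e1
    constructor
    · intro h
      have : u0*(v0*x0 + v1*x1 + v2) = 0 := by linear_combination key + v0*h
      exact (mul_eq_zero.mp this).resolve_left hu
    · intro h
      have : v0*(u0*x0 + u1*x1 + u2) = 0 := by linear_combination u0*h - key
      exact (mul_eq_zero.mp this).resolve_left hv0
  · have hv1 : v1 ≠ 0 := by
      intro h0
      have h1 : u1*v0 = 0 := by linear_combination -e2 + u0*h0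
      rcases hv with h | h
      · exact h ((mul_eq_zero.mp h1).resolve_left hu)
      · exact h h0
    have key : u1*(v0*x0 + v1*x1 + v2) - v1*(u0*x0 + u1*x1 + u2) = 0 := by
      linear_combination e0 - x0*e2
    constructor
    · intro h
      have : u1*(v0*x0 + v1*x1 + v2) = 0 := by linear_combination key + v1*h
      exact (mul_eq_zero.mp this).resolve_left hu
    · intro h
      have : v1*(u0*x0 + u1*x1 + u2) = 0 := by linear_combination u1*h - key
      exact (mul_eq_zero.mp this).resolve_left hv1

end RosanesAux

open RosanesAux in
/-- Rosanes' theorem: two (direct) bi-homological triangles are tri-homological. -/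
theorem rosanes_bihomological_trihomological
    (A B C A₁ B₁ C₁ R : EuclideanSpace ℝ (Fin 2))
    (hT : AffineIndependent ℝ ![A, B, C])
    (hT₁ : AffineIndependent ℝ ![A₁, B₁, C₁])
    (hA₁' : A ∉ affineSpan ℝ {A₁, B₁}) (hA₂' : A ∉ affineSpan ℝ {B₁, C₁})
    (hA₃' : A ∉ affineSpan ℝ {C₁, A₁})
    (hB₁' : B ∉ affineSpan ℝ {A₁, B₁}) (hB₂' : B ∉ affineSpan ℝ {B₁, C₁})
    (hB₃' : B ∉ affineSpan ℝ {C₁, A₁})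
    (hC₁' : C ∉ affineSpan ℝ {A₁, B₁}) (hC₂' : C ∉ affineSpan ℝ {B₁, C₁})
    (hC₃' : C ∉ affineSpan ℝ {C₁, A₁})
    (hA₁'' : A₁ ∉ affineSpan ℝ {A, B}) (hA₂'' : A₁ ∉ affineSpan ℝ {B, C})
    (hA₃'' : A₁ ∉ affineSpan ℝ {C, A})
    (hB₁'' : B₁ ∉ affineSpan ℝ {A, B}) (hB₂'' : B₁ ∉ affineSpan ℝ {B, C})
    (hB₃'' : B₁ ∉ affineSpan ℝ {C, A})
    (hC₁'' : C₁ ∉ affineSpan ℝ {A, B}) (hC₂'' : C₁ ∉ affineSpan ℝ {B, C})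
    (hC₃'' : C₁ ∉ affineSpan ℝ {C, A})
    (hconc₁ : ∃ O, O ∈ affineSpan ℝ {A, A₁} ∧ O ∈ affineSpan ℝ {B, B₁} ∧
      O ∈ affineSpan ℝ {C, C₁})
    (hconc₂ : ∃ Q, Q ∈ affineSpan ℝ {A, B₁} ∧ Q ∈ affineSpan ℝ {B, C₁} ∧
      Q ∈ affineSpan ℝ {C, A₁})
    (hne : affineSpan ℝ {A, C₁} ≠ affineSpan ℝ {B, A₁})
    (hR₁ : R ∈ affineSpan ℝ {A, C₁}) (hR₂ : R ∈ affineSpan ℝ {B, A₁}) :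
    R ∈ affineSpan ℝ {C, B₁} := by
  obtain ⟨O, hO1, hO2, hO3⟩ := hconc₁
  obtain ⟨P, hP1, hP2, hP3⟩ := hconc₂
  -- basic distinctness facts
  have hAC₁ : A ≠ C₁ := fun h => hC₃'' (h ▸ right_mem_affineSpan_pair ℝ C A)
  have hBA₁ : B ≠ A₁ := fun h => hA₁'' (h ▸ right_mem_affineSpan_pair ℝ A B)
  have hCB₁ : C ≠ B₁ := fun h => hC₁' (h ▸ right_mem_affineSpan_pair ℝ A₁ B₁)
  -- determinant forms of the incidence hypotheses
  have h1 := det_of_mem hO1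
  have h2 := det_of_mem hO2
  have h3 := det_of_mem hO3
  have h4 := det_of_mem hP1
  have h5 := det_of_mem hP2
  have h6 := det_of_mem hP3
  have h7 := det_of_mem hR₁
  have h8 := det_of_mem hR₂
  -- the two lines A C₁ and B A₁ are not proportional
  have hn : (C₁ 0 - A 0)*(B 0*A₁ 1 - B 1*A₁ 0) - (A 0*C₁ 1 - A 1*C₁ 0)*(A₁ 0 - B 0) ≠ 0 ∨
      (A 0*C₁ 1 - A 1*C₁ 0)*(B 1 - A₁ 1) - (A 1 - C₁ 1)*(B 0*A₁ 1 - B 1*A₁ 0) ≠ 0 ∨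
      (A 1 - C₁ 1)*(A₁ 0 - B 0) - (C₁ 0 - A 0)*(B 1 - A₁ 1) ≠ 0 := by
    by_contra hc
    push_neg at hc
    obtain ⟨e0, e1, e2⟩ := hc
    have hu : (A 1 - C₁ 1) ≠ 0 ∨ (C₁ 0 - A 0) ≠ 0 := by
      by_contra hc2
      push_neg at hc2
      exact hAC₁ (pt_ext (by linarith [hc2.2]) (by linarith [hc2.1]))
    have hv : (B 1 - A₁ 1) ≠ 0 ∨ (A₁ 0 - B 0) ≠ 0 := by
      by_contra hc2
      push_neg at hc2
      exact hBA₁ (pt_ext (by linarith [hc2.2]) (by linarith [hc2.1]))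
    refine hne (SetLike.ext fun X => ?_)
    have hiff := prop_iff (A 1 - C₁ 1) (C₁ 0 - A 0) (A 0*C₁ 1 - A 1*C₁ 0)
      (B 1 - A₁ 1) (A₁ 0 - B 0) (B 0*A₁ 1 - B 1*A₁ 0) (X 0) (X 1) hu hv
      (by linear_combination e0) (by linear_combination e1) (by linear_combination e2)
    constructor
    · intro hX
      refine mem_of_det hBA₁ ?_
      have hdX := det_of_mem hX
      have := hiff.mp (by linear_combination hdX)
      linear_combination this
    · intro hX
      refine mem_of_det hAC₁ ?_
      have hdX := det_of_mem hX
      have := hiff.mpr (by linear_combination hdX)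
      linear_combination this
  -- determinant of the first triple of cevian lines vanishes (common point O)
  have hdet1 := conc_det (A 1 - A₁ 1) (A₁ 0 - A 0) (A 0*A₁ 1 - A 1*A₁ 0)
    (B 1 - B₁ 1) (B₁ 0 - B 0) (B 0*B₁ 1 - B 1*B₁ 0)
    (C 1 - C₁ 1) (C₁ 0 - C 0) (C 0*C₁ 1 - C 1*C₁ 0) (O 0) (O 1)
    (by linear_combination h1) (by linear_combination h2) (by linear_combination h3)
  -- determinant of the second triple vanishes (common point P)
  have hdet2 := conc_det (A 1 - B₁ 1) (B₁ 0 - A 0) (A 0*B₁ 1 - A 1*B₁ 0)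
    (B 1 - C₁ 1) (C₁ 0 - B 0) (B 0*C₁ 1 - B 1*C₁ 0)
    (C 1 - A₁ 1) (A₁ 0 - C 0) (C 0*A₁ 1 - C 1*A₁ 0) (P 0) (P 1)
    (by linear_combination h4) (by linear_combination h5) (by linear_combination h6)
  -- hence by the Rosanes identity the determinant of the third triple vanishes
  have hdet3 : (A 1 - C₁ 1)*((A₁ 0 - B 0)*(C 0*B₁ 1 - C 1*B₁ 0) -
        (B 0*A₁ 1 - B 1*A₁ 0)*(B₁ 0 - C 0)) -
      (C₁ 0 - A 0)*((B 1 - A₁ 1)*(C 0*B₁ 1 - C 1*B₁ 0) -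
        (B 0*A₁ 1 - B 1*A₁ 0)*(C 1 - B₁ 1)) +
      (A 0*C₁ 1 - A 1*C₁ 0)*((B 1 - A₁ 1)*(B₁ 0 - C 0) -
        (A₁ 0 - B 0)*(C 1 - B₁ 1)) = 0 := by
    linear_combination -hdet1 - hdet2
  refine mem_of_det hCB₁ ?_
  have main := line_through (A 1 - C₁ 1) (C₁ 0 - A 0) (A 0*C₁ 1 - A 1*C₁ 0)
    (B 1 - A₁ 1) (A₁ 0 - B 0) (B 0*A₁ 1 - B 1*A₁ 0)
    (C 1 - B₁ 1) (B₁ 0 - C 0) (C 0*B₁ 1 - C 1*B₁ 0) (R 0) (R 1)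
    hdet3 (by linear_combination h7) (by linear_combination h8) hn
  linear_combination main
end
end

section
/- Pappus' theorem. Let d₁ and d₂ be distinct affine lines in the Euclidean plane. Let A, C, E be pairwise distinct points on d₁ none of which lies on d₂, and let B, D, F be pairwise distinct points on d₂ none of which lies on d₁. Suppose U lies on both line AB and line DE with line AB ≠ line DE, V lies on both line BC and line EF with line BC ≠ line EF, and W lies on both line CD and line FA with line CD ≠ line FA. Then U, V, W are collinear. -/
/-!
Pappus' configuration is affine-invariant, and since `B ∉ AC` in a plane there is an affine
isomorphism `K × K ≃ᵃ P` sending `(0, 0), (1, 0), (0, 1)` to `A, C, B`. There `E = (e, 0)`,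
`D = (p, q)`, and `F, U, V, W` each depend on one parameter along their first line. Lying also on
its second line is a `2 × 2` linear system for each of `U, V, W`; the systems are nondegenerate
because `e ≠ 0`, `e ≠ 1` and `q ≠ 0`, and solving them turns the collinearity of `U, V, W` into a
polynomial identity.
-/

open AffineMap

section Coordinates

variable {K : Type*} [Field K]

theorem pappus_coordinate_identity {e p q f u v w s t r : K} (he₀ : e ≠ 0) (he₁ : e ≠ 1)
    (hq : q ≠ 0) (hUx : (1 - s) * p + s * e = 0) (hUy : (1 - s) * q = u)
    (hVx : (1 - t) * e + t * (f * p) = v) (hVy : t * (1 - f + f * q) = 1 - v)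
    (hWx : (1 - r) * (f * p) = 1 - w + w * p) (hWy : (1 - r) * (1 - f + f * q) = w * q) :
    v * (w * q - u) = (1 - v - u) * (1 - w + w * p) := by
  -- `(m, n)` are the coordinates of `F`; `a`, `c`, `g` are the determinants of the systems
  -- locating `U`, `V`, `W`.
  set m := f * p
  set n := 1 - f + f * q
  set a := e - p
  set c := m + n - e
  set g := q * m - (p - 1) * n
  have ha : (1 - s) * a = e := by linear_combination -hUx
  have hc : t * c = 1 - e := by linear_combination hVx + hVy
  have hg : (1 - r) * g = q := by linear_combination q * hWx - (p - 1) * hWy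
  have ha0 : a ≠ 0 := right_ne_zero_of_mul (ha ▸ he₀)
  have hc0 : c ≠ 0 := right_ne_zero_of_mul (hc ▸ sub_ne_zero.2 he₁.symm)
  have hg0 : g ≠ 0 := right_ne_zero_of_mul (hg ▸ hq)
  obtain rfl : u = q * e / a := eq_div_of_mul_eq ha0 (by linear_combination -a * hUy - q * hUx)
  obtain rfl : v = (e * c + (1 - e) * (m - e)) / c :=
    eq_div_of_mul_eq hc0 (by linear_combination -c * hVx + (m - e) * hc)
  obtain rfl : w = n / g := eq_div_of_mul_eq hg0 (by linear_combination -m * hWy + n * hWx)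
  field_simp
  ring

theorem collinear_prod_of_cross_eq {a b c : K × K}
    (h : (b.1 - a.1) * (c.2 - a.2) = (b.2 - a.2) * (c.1 - a.1)) : Collinear K {a, b, c} := by
  rcases eq_or_ne a b with rfl | hab
  · simpa using collinear_pair K a c
  rw [Set.pair_comm, Set.insert_comm]
  refine collinear_insert_of_mem_affineSpan_pair (mem_affineSpan_pair_iff_exists_lineMap_eq.2 ?_)
  simp only [Prod.ext_iff, fst_lineMap, snd_lineMap, lineMap_apply_ring']
  by_cases h₁ : b.1 - a.1 = 0
  · have h₂ : b.2 - a.2 ≠ 0 := fun h₂ ↦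
      hab (Prod.ext (by linear_combination -h₁) (by linear_combination -h₂))
    refine ⟨(c.2 - a.2) / (b.2 - a.2), ?_, ?_⟩ <;> field_simp
    · linear_combination h
    · ring
  · refine ⟨(c.1 - a.1) / (b.1 - a.1), ?_, ?_⟩ <;> field_simp
    · ring
    · linear_combination -h

theorem pappus_prod {E D F U V W : K × K} (hE : E ∈ line[K, (0, 0), (1, 0)])
    (hE₀ : (0, 0) ≠ E) (hE₁ : (1, 0) ≠ E) (hD : D ∉ line[K, (0, 0), (1, 0)])
    (hF : F ∈ line[K, (0, 1), D])
    (hU₁ : U ∈ line[K, (0, 0), (0, 1)]) (hU₂ : U ∈ line[K, D, E])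
    (hV₁ : V ∈ line[K, (0, 1), (1, 0)]) (hV₂ : V ∈ line[K, E, F])
    (hW₁ : W ∈ line[K, (1, 0), D]) (hW₂ : W ∈ line[K, F, (0, 0)]) :
    Collinear K {U, V, W} := by
  obtain ⟨p, q⟩ := D
  simp only [mem_affineSpan_pair_iff_exists_lineMap_eq] at hE hD hF hU₁ hU₂ hV₁ hV₂ hW₁ hW₂
  obtain ⟨e, rfl⟩ := hE
  obtain ⟨f, rfl⟩ := hF
  obtain ⟨u, rfl⟩ := hU₁
  obtain ⟨v, rfl⟩ := hV₁
  obtain ⟨w, rfl⟩ := hW₁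
  obtain ⟨s, hU⟩ := hU₂
  obtain ⟨t, hV⟩ := hV₂
  obtain ⟨r, hW⟩ := hW₂
  refine collinear_prod_of_cross_eq ?_
  simp only [Prod.ext_iff, fst_lineMap, snd_lineMap, lineMap_apply_ring, mul_zero, mul_one,
    zero_add, add_zero, sub_zero, ne_eq, not_and, not_exists, forall_eq, not_true_eq_false,
    imp_false] at hD hE₀ hE₁ hU hV hW ⊢
  exact pappus_coordinate_identity (Ne.symm hE₀) (Ne.symm hE₁) (Ne.symm hD) hU.1 hU.2 hV.1 hV.2
    hW.1 hW.2

end Coordinates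

section AffinePlane

variable {K M P : Type*} [Field K] [AddCommGroup M] [Module K M] [AddTorsor M P]

theorem Collinear.affineMap_image {M₂ P₂ : Type*} [AddCommGroup M₂] [Module K M₂]
    [AddTorsor M₂ P₂] (f : P →ᵃ[K] P₂) {s : Set P} (h : Collinear K s) :
    Collinear K (f '' s) := by
  obtain ⟨p₀, v, hv⟩ := (collinear_iff_exists_forall_eq_smul_vadd s).1 h
  refine (collinear_iff_exists_forall_eq_smul_vadd _).2 ⟨f p₀, f.linear v, ?_⟩
  rintro _ ⟨p, hp, rfl⟩
  obtain ⟨r, rfl⟩ := hv p hp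
  exact ⟨r, by rw [f.map_vadd, f.linear.map_smul]⟩

theorem AffineEquiv.apply_mem_affineSpan_pair_iff {M₂ P₂ : Type*} [AddCommGroup M₂]
    [Module K M₂] [AddTorsor M₂ P₂] (φ : P ≃ᵃ[K] P₂) {x y z : P} :
    φ x ∈ line[K, φ y, φ z] ↔ x ∈ line[K, y, z] := by
  rw [← Set.image_pair, ← φ.coe_toAffineMap, ← AffineSubspace.map_span,
    AffineSubspace.mem_map_iff_mem_of_injective φ.injective]

theorem exists_affineEquiv_prod_of_notMem_affineSpan_pair (hM : Module.finrank K M = 2)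
    {A B C : P} (hAC : A ≠ C) (hB : B ∉ line[K, A, C]) :
    ∃ φ : (K × K) ≃ᵃ[K] P, φ (0, 0) = A ∧ φ (1, 0) = C ∧ φ (0, 1) = B := by
  have : FiniteDimensional K M := Module.finite_of_finrank_eq_succ hM
  have hli : LinearIndependent K ![C -ᵥ A, B -ᵥ A] :=
    (LinearIndependent.pair_iff' (vsub_ne_zero.2 hAC.symm)).2 fun a ha ↦ hB <| by
      rw [← vsub_vadd B A, vadd_left_mem_affineSpan_pair]
      exact ⟨a, ha⟩
  let L : K × K →ₗ[K] M :=
    (LinearMap.toSpanSingleton K M (C -ᵥ A)).coprod (LinearMap.toSpanSingleton K M (B -ᵥ A))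
  have hL : Function.Injective L := by
    rw [injective_iff_map_eq_zero]
    rintro ⟨x, y⟩ hxy
    obtain ⟨rfl, rfl⟩ := LinearIndependent.pair_iff.1 hli x y (by simpa [L] using hxy)
    rfl
  have hbij : Function.Bijective L :=
    ⟨hL, (LinearMap.injective_iff_surjective_of_finrank_eq_finrank (by simp [hM])).1 hL⟩
  refine ⟨(LinearEquiv.ofBijective L hbij).toAffineEquiv.trans (AffineEquiv.vaddConst K A),
    ?_, ?_, ?_⟩ <;> simp [L]

theorem pappus_of_finrank_eq_two (hM : Module.finrank K M = 2) {A C E B D F U V W : P}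
    (hE : E ∈ line[K, A, C]) (hAC : A ≠ C) (hAE : A ≠ E) (hCE : C ≠ E)
    (hB : B ∉ line[K, A, C]) (hD : D ∉ line[K, A, C]) (hF : F ∈ line[K, B, D])
    (hU₁ : U ∈ line[K, A, B]) (hU₂ : U ∈ line[K, D, E])
    (hV₁ : V ∈ line[K, B, C]) (hV₂ : V ∈ line[K, E, F])
    (hW₁ : W ∈ line[K, C, D]) (hW₂ : W ∈ line[K, F, A]) :
    Collinear K {U, V, W} := by
  obtain ⟨φ, rfl, rfl, rfl⟩ := exists_affineEquiv_prod_of_notMem_affineSpan_pair hM hAC hB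
  obtain ⟨e, rfl⟩ := φ.surjective E
  obtain ⟨d, rfl⟩ := φ.surjective D
  obtain ⟨f, rfl⟩ := φ.surjective F
  obtain ⟨u, rfl⟩ := φ.surjective U
  obtain ⟨v, rfl⟩ := φ.surjective V
  obtain ⟨w, rfl⟩ := φ.surjective W
  simp only [φ.apply_mem_affineSpan_pair_iff, φ.injective.ne_iff] at *
  simpa [Set.image_insert_eq, Set.image_pair] using
    (pappus_prod hE hAE hCE hD hF hU₁ hU₂ hV₁ hV₂ hW₁ hW₂).affineMap_image φ.toAffineMap

end AffinePlane

theorem pappus_general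
    (d₁ d₂ : AffineSubspace ℝ (EuclideanSpace ℝ (Fin 2)))
    (hd₁ : ∃ X Y : EuclideanSpace ℝ (Fin 2), X ≠ Y ∧ d₁ = affineSpan ℝ {X, Y})
    (hd₂ : ∃ X Y : EuclideanSpace ℝ (Fin 2), X ≠ Y ∧ d₂ = affineSpan ℝ {X, Y})
    (A C E B D F U V W : EuclideanSpace ℝ (Fin 2))
    (hA : A ∈ d₁) (hC : C ∈ d₁) (hE : E ∈ d₁)
    (hAC : A ≠ C) (hCE : C ≠ E) (hAE : A ≠ E)
    (hB : B ∈ d₂) (hD : D ∈ d₂) (hF : F ∈ d₂)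
    (hBD : B ≠ D)
    (hB₁ : B ∉ d₁) (hD₁ : D ∉ d₁)
    (hU₁ : U ∈ affineSpan ℝ {A, B}) (hU₂ : U ∈ affineSpan ℝ {D, E})
    (hV₁ : V ∈ affineSpan ℝ {B, C}) (hV₂ : V ∈ affineSpan ℝ {E, F})
    (hW₁ : W ∈ affineSpan ℝ {C, D}) (hW₂ : W ∈ affineSpan ℝ {F, A}) :
    Collinear ℝ {U, V, W} := by
  obtain ⟨X₁, Y₁, -, rfl⟩ := hd₁
  obtain ⟨X₂, Y₂, -, rfl⟩ := hd₂
  rw [← affineSpan_pair_eq_of_mem_of_mem_of_ne hA hC hAC] at hE hB₁ hD₁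
  rw [← affineSpan_pair_eq_of_mem_of_mem_of_ne hB hD hBD] at hF
  exact pappus_of_finrank_eq_two finrank_euclideanSpace_fin hE hAC hAE hCE hB₁ hD₁ hF
    hU₁ hU₂ hV₁ hV₂ hW₁ hW₂

/-- Pappus' theorem: if the vertices of a hexagon lie alternately on two lines,
then the intersections of the opposite sides are collinear. -/
theorem pappus
    (d₁ d₂ : AffineSubspace ℝ (EuclideanSpace ℝ (Fin 2)))
    (hd₁ : ∃ X Y : EuclideanSpace ℝ (Fin 2), X ≠ Y ∧ d₁ = affineSpan ℝ {X, Y})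
    (hd₂ : ∃ X Y : EuclideanSpace ℝ (Fin 2), X ≠ Y ∧ d₂ = affineSpan ℝ {X, Y})
    (hd : d₁ ≠ d₂)
    (A C E B D F U V W : EuclideanSpace ℝ (Fin 2))
    (hA : A ∈ d₁) (hC : C ∈ d₁) (hE : E ∈ d₁)
    (hAC : A ≠ C) (hCE : C ≠ E) (hAE : A ≠ E)
    (hA₂ : A ∉ d₂) (hC₂ : C ∉ d₂) (hE₂ : E ∉ d₂)
    (hB : B ∈ d₂) (hD : D ∈ d₂) (hF : F ∈ d₂)
    (hBD : B ≠ D) (hDF : D ≠ F) (hBF : B ≠ F)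
    (hB₁ : B ∉ d₁) (hD₁ : D ∉ d₁) (hF₁ : F ∉ d₁)
    (hU₁ : U ∈ affineSpan ℝ {A, B}) (hU₂ : U ∈ affineSpan ℝ {D, E})
    (hUne : affineSpan ℝ {A, B} ≠ affineSpan ℝ {D, E})
    (hV₁ : V ∈ affineSpan ℝ {B, C}) (hV₂ : V ∈ affineSpan ℝ {E, F})
    (hVne : affineSpan ℝ {B, C} ≠ affineSpan ℝ {E, F})
    (hW₁ : W ∈ affineSpan ℝ {C, D}) (hW₂ : W ∈ affineSpan ℝ {F, A})
    (hWne : affineSpan ℝ {C, D} ≠ affineSpan ℝ {F, A}) :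
    Collinear ℝ {U, V, W} :=
  pappus_general d₁ d₂ hd₁ hd₂ A C E B D F U V W hA hC hE hAC hCE hAE hB hD hF hBD hB₁ hD₁ hU₁ hU₂
    hV₁ hV₂ hW₁ hW₂
end

section
/- Pascal's theorem. Let Γ be a circle with center O and radius r > 0 in the Euclidean plane, and let A, B, C, D, E, F be six pairwise distinct points on Γ. Suppose P lies on both line AB and line DE with line AB ≠ line DE, Q lies on both line BC and line EF with line BC ≠ line EF, and R lies on both line CD and line FA with line CD ≠ line FA. Then P, Q, R are collinear. -/
/-!
Identify the plane with `ℂ`, the centre going to `0`, so that the circle becomes `‖z‖ = r` and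
`conj z = r² / z` on it. A point `p` of the chord `ab` then satisfies
`r² p + a b conj p = r² (a + b)`. Two such equations determine both `p` and `conj p` as rational
functions of the endpoints; they are solvable because `a b = d e` together with `a + b = d + e`
would force `{a, b} = {d, e}`. Collinearity of `p, q, x` says that `(q - p) conj (x - p)` is real,
and after substituting the formulas this is a polynomial identity.
-/

open ComplexConjugate

noncomputable section

universe u v

theorem Collinear.map {k P₁ P₂ : Type*} {V₁ : Type u} {V₂ : Type v} [DivisionRing k]
    [AddCommGroup V₁] [Module k V₁] [AddTorsor V₁ P₁] [AddCommGroup V₂] [Module k V₂]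
    [AddTorsor V₂ P₂] {s : Set P₁} (h : Collinear k s) (f : P₁ →ᵃ[k] P₂) :
    Collinear k (f '' s) := by
  rw [Collinear, ← AffineMap.map_vectorSpan, ← Cardinal.lift_le_one_iff.{v, u}]
  exact (lift_rank_map_le f.linear _).trans (Cardinal.lift_le_one_iff.{u, v}.mpr h)

namespace AffineEquiv

variable {k V₁ V₂ P₁ P₂ : Type*} [AddCommGroup V₁] [AddCommGroup V₂]

section Ring

variable [Ring k] [Module k V₁] [AddTorsor V₁ P₁] [Module k V₂] [AddTorsor V₂ P₂]
  (f : P₁ ≃ᵃ[k] P₂)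

theorem map_affineSpan_pair (a b : P₁) :
    (line[k, a, b]).map (f : P₁ →ᵃ[k] P₂) = line[k, f a, f b] := by
  rw [AffineSubspace.map_span, Set.image_pair, coe_coe]

theorem mem_affineSpan_pair_iff {a b z : P₁} : f z ∈ line[k, f a, f b] ↔ z ∈ line[k, a, b] := by
  rw [← f.map_affineSpan_pair, ← coe_coe, AffineSubspace.mem_map_iff_mem_of_injective f.injective]

theorem affineSpan_pair_eq_iff {a b c d : P₁} :
    line[k, f a, f b] = line[k, f c, f d] ↔ line[k, a, b] = line[k, c, d] := by
  rw [← f.map_affineSpan_pair, ← f.map_affineSpan_pair]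
  exact (AffineSubspace.gciMapComap f.injective).l_injective.eq_iff

end Ring

theorem collinear_image_iff [DivisionRing k] [Module k V₁] [AddTorsor V₁ P₁] [Module k V₂]
    [AddTorsor V₂ P₂] (f : P₁ ≃ᵃ[k] P₂) {s : Set P₁} : Collinear k (f '' s) ↔ Collinear k s := by
  refine ⟨fun h => ?_, fun h => h.map (f : P₁ →ᵃ[k] P₂)⟩
  simpa [Set.image_image] using h.map (f.symm : P₂ →ᵃ[k] P₁)

end AffineEquiv

namespace Complex

/-- For `a, b, d, e` on the circle `‖z‖ = r`, the chords `ab` and `de` meet at `chordMeet a b d e`,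
and the conjugate of that point is `r ^ 2 * chordMeetConj a b d e`. -/
def chordMeet (a b d e : ℂ) : ℂ := (a * b * (d + e) - d * e * (a + b)) / (a * b - d * e)

def chordMeetConj (a b d e : ℂ) : ℂ := (a + b - d - e) / (a * b - d * e)

theorem pascal_identity {a b c d e f : ℂ} (h₁ : a * b ≠ d * e) (h₂ : b * c ≠ e * f)
    (h₃ : c * d ≠ f * a) :
    (chordMeet b c e f - chordMeet a b d e) * (chordMeetConj c d f a - chordMeetConj a b d e) =
      (chordMeetConj b c e f - chordMeetConj a b d e) *
        (chordMeet c d f a - chordMeet a b d e) := by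
  have h₁' : a * b - d * e ≠ 0 := sub_ne_zero.mpr h₁
  have h₂' : b * c - e * f ≠ 0 := sub_ne_zero.mpr h₂
  have h₃' : c * d - f * a ≠ 0 := sub_ne_zero.mpr h₃
  unfold chordMeet chordMeetConj
  rw [div_sub_div _ _ h₂' h₁', div_sub_div _ _ h₃' h₁', div_sub_div _ _ h₂' h₁',
    div_sub_div _ _ h₃' h₁', div_mul_div_comm, div_mul_div_comm]
  congr 1
  ring

theorem collinear_of_mul_conj_eq {p q x : ℂ}
    (h : (q - p) * conj (x - p) = conj (q - p) * (x - p)) : Collinear ℝ {p, q, x} := by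
  rcases eq_or_ne q p with rfl | hqp
  · simpa using collinear_pair ℝ q x
  have hqp' : q - p ≠ 0 := sub_ne_zero.mpr hqp
  set w := (x - p) / (q - p) with hw
  have hw_real : conj w = w := by
    rw [hw, map_div₀, div_eq_div_iff ((map_ne_zero conj).mpr hqp') hqp']
    linear_combination h
  have hx : x ∈ line[ℝ, p, q] := by
    rw [mem_affineSpan_pair_iff_exists_lineMap_eq]
    refine ⟨w.re, ?_⟩
    rw [AffineMap.lineMap_apply, vsub_eq_sub, vadd_eq_add, real_smul,
      conj_eq_iff_re.mp hw_real, hw]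
    field_simp
    ring
  have hcol := collinear_insert_of_mem_affineSpan_pair hx
  rwa [Set.insert_comm x p, Set.pair_comm x q] at hcol

section Chords

variable {r : ℝ} {a b d e p : ℂ}

theorem chord_equation (ha : ‖a‖ = r) (hb : ‖b‖ = r) (hp : p ∈ line[ℝ, a, b]) :
    r ^ 2 * p + a * b * conj p = r ^ 2 * (a + b) := by
  obtain ⟨t, rfl⟩ := mem_affineSpan_pair_iff_exists_lineMap_eq.mp hp
  have ha' : a * conj a = r ^ 2 := by rw [mul_conj', ha]
  have hb' : b * conj b = r ^ 2 := by rw [mul_conj', hb]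
  rw [AffineMap.lineMap_apply, vsub_eq_sub, vadd_eq_add, real_smul]
  simp only [map_add, map_mul, map_sub, conj_ofReal]
  linear_combination (b * (1 - t)) * ha' + (t * a) * hb'

theorem mul_ne_mul_of_affineSpan_pair_ne (hr : r ≠ 0) (ha : ‖a‖ = r) (hb : ‖b‖ = r)
    (hd : ‖d‖ = r) (he : ‖e‖ = r) (hp₁ : p ∈ line[ℝ, a, b]) (hp₂ : p ∈ line[ℝ, d, e])
    (hne : line[ℝ, a, b] ≠ line[ℝ, d, e]) : a * b ≠ d * e := by
  intro hprod
  have hsum : a + b = d + e := by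
    apply mul_left_cancel₀ (pow_ne_zero 2 (ofReal_ne_zero.mpr hr))
    rw [← chord_equation ha hb hp₁, ← chord_equation hd he hp₂, hprod]
  have hroots : (a - d) * (a - e) = 0 := by linear_combination a * hsum - hprod
  apply hne
  rcases mul_eq_zero.mp hroots with had | hae
  · obtain rfl : a = d := sub_eq_zero.mp had
    obtain rfl : b = e := by linear_combination hsum
    rfl
  · obtain rfl : a = e := sub_eq_zero.mp hae
    obtain rfl : b = d := by linear_combination hsum
    rw [Set.pair_comm]

theorem eq_chordMeet_and_conj_eq (hr : r ≠ 0) (ha : ‖a‖ = r) (hb : ‖b‖ = r)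
    (hd : ‖d‖ = r) (he : ‖e‖ = r) (hp₁ : p ∈ line[ℝ, a, b]) (hp₂ : p ∈ line[ℝ, d, e])
    (hne : a * b ≠ d * e) :
    p = chordMeet a b d e ∧ conj p = r ^ 2 * chordMeetConj a b d e := by
  have h₁ := chord_equation ha hb hp₁
  have h₂ := chord_equation hd he hp₂
  have hne' : a * b - d * e ≠ 0 := sub_ne_zero.mpr hne
  constructor
  · rw [chordMeet, eq_div_iff hne']
    apply mul_left_cancel₀ (pow_ne_zero 2 (ofReal_ne_zero.mpr hr))
    linear_combination a * b * h₂ - d * e * h₁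
  · rw [chordMeetConj, mul_div_assoc', eq_div_iff hne']
    linear_combination h₁ - h₂

end Chords

theorem pascal_of_norm_eq {r : ℝ} (hr : r ≠ 0) {a b c d e f p q x : ℂ}
    (ha : ‖a‖ = r) (hb : ‖b‖ = r) (hc : ‖c‖ = r) (hd : ‖d‖ = r) (he : ‖e‖ = r) (hf : ‖f‖ = r)
    (hp₁ : p ∈ line[ℝ, a, b]) (hp₂ : p ∈ line[ℝ, d, e]) (hp : line[ℝ, a, b] ≠ line[ℝ, d, e])
    (hq₁ : q ∈ line[ℝ, b, c]) (hq₂ : q ∈ line[ℝ, e, f]) (hq : line[ℝ, b, c] ≠ line[ℝ, e, f])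
    (hx₁ : x ∈ line[ℝ, c, d]) (hx₂ : x ∈ line[ℝ, f, a]) (hx : line[ℝ, c, d] ≠ line[ℝ, f, a]) :
    Collinear ℝ {p, q, x} := by
  have hab := mul_ne_mul_of_affineSpan_pair_ne hr ha hb hd he hp₁ hp₂ hp
  have hbc := mul_ne_mul_of_affineSpan_pair_ne hr hb hc he hf hq₁ hq₂ hq
  have hcd := mul_ne_mul_of_affineSpan_pair_ne hr hc hd hf ha hx₁ hx₂ hx
  obtain ⟨rfl, hp'⟩ := eq_chordMeet_and_conj_eq hr ha hb hd he hp₁ hp₂ hab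
  obtain ⟨rfl, hq'⟩ := eq_chordMeet_and_conj_eq hr hb hc he hf hq₁ hq₂ hbc
  obtain ⟨rfl, hx'⟩ := eq_chordMeet_and_conj_eq hr hc hd hf ha hx₁ hx₂ hcd
  apply collinear_of_mul_conj_eq
  rw [map_sub, map_sub, hp', hq', hx']
  linear_combination (r : ℂ) ^ 2 * pascal_identity hab hbc hcd

end Complex

def toComplexCentered (O : EuclideanSpace ℝ (Fin 2)) : EuclideanSpace ℝ (Fin 2) ≃ᵃⁱ[ℝ] ℂ :=
  (AffineIsometryEquiv.vaddConst ℝ O).symm.trans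
    Complex.orthonormalBasisOneI.repr.symm.toAffineIsometryEquiv

theorem norm_toComplexCentered (O X : EuclideanSpace ℝ (Fin 2)) :
    ‖toComplexCentered O X‖ = dist X O := by
  rw [← (toComplexCentered O).dist_map X O]
  simp [toComplexCentered]

theorem pascal_general
    (O A B C D E F P Q R : EuclideanSpace ℝ (Fin 2)) (r : ℝ)
    (hr : 0 < r)
    (hA : A ∈ Metric.sphere O r) (hB : B ∈ Metric.sphere O r)
    (hC : C ∈ Metric.sphere O r) (hD : D ∈ Metric.sphere O r)
    (hE : E ∈ Metric.sphere O r) (hF : F ∈ Metric.sphere O r)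
    (hP₁ : P ∈ affineSpan ℝ {A, B}) (hP₂ : P ∈ affineSpan ℝ {D, E})
    (hPne : affineSpan ℝ {A, B} ≠ affineSpan ℝ {D, E})
    (hQ₁ : Q ∈ affineSpan ℝ {B, C}) (hQ₂ : Q ∈ affineSpan ℝ {E, F})
    (hQne : affineSpan ℝ {B, C} ≠ affineSpan ℝ {E, F})
    (hR₁ : R ∈ affineSpan ℝ {C, D}) (hR₂ : R ∈ affineSpan ℝ {F, A})
    (hRne : affineSpan ℝ {C, D} ≠ affineSpan ℝ {F, A}) :
    Collinear ℝ {P, Q, R} := by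
  let f := (toComplexCentered O).toAffineEquiv
  have hnorm {X} (hX : X ∈ Metric.sphere O r) : ‖f X‖ = r := norm_toComplexCentered O X ▸ hX
  have hmem {X Y Z} (h : Z ∈ line[ℝ, X, Y]) : f Z ∈ line[ℝ, f X, f Y] :=
    f.mem_affineSpan_pair_iff.mpr h
  have hne {X Y Z W} (h : line[ℝ, X, Y] ≠ line[ℝ, Z, W]) :
      line[ℝ, f X, f Y] ≠ line[ℝ, f Z, f W] :=
    f.affineSpan_pair_eq_iff.not.mpr h
  have hcol := Complex.pascal_of_norm_eq hr.ne' (hnorm hA) (hnorm hB) (hnorm hC) (hnorm hD)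
    (hnorm hE) (hnorm hF) (hmem hP₁) (hmem hP₂) (hne hPne) (hmem hQ₁) (hmem hQ₂) (hne hQne)
    (hmem hR₁) (hmem hR₂) (hne hRne)
  rwa [← f.collinear_image_iff, Set.image_insert_eq, Set.image_insert_eq, Set.image_singleton]

/-- Pascal's theorem: the opposite sides of a hexagon inscribed in a circle
meet in three collinear points. -/
theorem pascal
    (O A B C D E F P Q R : EuclideanSpace ℝ (Fin 2)) (r : ℝ)
    (hr : 0 < r)
    (hdist : List.Pairwise Ne [A, B, C, D, E, F])
    (hA : A ∈ Metric.sphere O r) (hB : B ∈ Metric.sphere O r)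
    (hC : C ∈ Metric.sphere O r) (hD : D ∈ Metric.sphere O r)
    (hE : E ∈ Metric.sphere O r) (hF : F ∈ Metric.sphere O r)
    (hP₁ : P ∈ affineSpan ℝ {A, B}) (hP₂ : P ∈ affineSpan ℝ {D, E})
    (hPne : affineSpan ℝ {A, B} ≠ affineSpan ℝ {D, E})
    (hQ₁ : Q ∈ affineSpan ℝ {B, C}) (hQ₂ : Q ∈ affineSpan ℝ {E, F})
    (hQne : affineSpan ℝ {B, C} ≠ affineSpan ℝ {E, F})
    (hR₁ : R ∈ affineSpan ℝ {C, D}) (hR₂ : R ∈ affineSpan ℝ {F, A})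
    (hRne : affineSpan ℝ {C, D} ≠ affineSpan ℝ {F, A}) :
    Collinear ℝ {P, Q, R} :=
  pascal_general O A B C D E F P Q R r hr hA hB hC hD hE hF hP₁ hP₂ hPne hQ₁ hQ₂ hQne hR₁ hR₂ hRne
end
end

section
/- Brocard angle formula. Let ABC be a nondegenerate triangle and let Ω be a point in the interior of the triangle (Ω ∈ interior (convexHull ℝ {A, B, C})) such that ∠ΩAB = ∠ΩBC = ∠ΩCA = ω for some real ω. Then cos ω / sin ω = cos(∠BAC)/sin(∠BAC) + cos(∠ABC)/sin(∠ABC) + cos(∠BCA)/sin(∠BCA), i.e. cot ω = cot A + cot B + cot C. -/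
/-!
Twice the area of a triangle times the cotangent of one of its angles is the inner product of
the two sides at that vertex. Write `Ω = a A + b B + c C` in barycentric coordinates (all
positive, since `Ω` is interior): the triangles `ΩAB`, `ΩBC`, `ΩCA` have `c`, `a`, `b` times the
area of `ABC`, and the inner products `⟪Ω - A, B - A⟫ + ⟪Ω - B, C - B⟫ + ⟪Ω - C, A - C⟫` do not
depend on `Ω` and equal the corresponding sum for the angles of `ABC`. With all three angles at
`Ω` equal to `ω` this reads `cot ω · area = (cot A + cot B + cot C) · area`.
-/

open EuclideanGeometry Module InnerProductGeometry RealInnerProductSpace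

namespace Orientation

variable {V : Type*} [NormedAddCommGroup V] [InnerProductSpace ℝ V] [Fact (finrank ℝ V = 2)]
  (o : Orientation ℝ V (Fin 2))

theorem abs_areaForm_eq_sin_angle_mul_norm_mul_norm (x y : V) :
    |o.areaForm x y| = Real.sin (angle x y) * (‖x‖ * ‖y‖) := by
  rw [sin_angle_mul_norm_mul_norm, real_inner_self_eq_norm_sq, real_inner_self_eq_norm_sq,
    ← Real.sqrt_sq_eq_abs]
  congr 1
  linarith [o.inner_sq_add_areaForm_sq x y]

theorem inner_eq_cot_angle_mul_abs_areaForm {x y : V} (h : o.areaForm x y ≠ 0) :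
    ⟪x, y⟫ = Real.cos (angle x y) / Real.sin (angle x y) * |o.areaForm x y| := by
  have hsin : Real.sin (angle x y) ≠ 0 := by
    rintro h0
    rw [← abs_ne_zero, abs_areaForm_eq_sin_angle_mul_norm_mul_norm, h0, zero_mul] at h
    exact h rfl
  rw [abs_areaForm_eq_sin_angle_mul_norm_mul_norm, ← cos_angle_mul_norm_mul_norm]
  field_simp

theorem areaForm_sub_sub_ne_zero {A B C : V} (hT : AffineIndependent ℝ ![A, B, C]) :
    o.areaForm (B - A) (C - A) ≠ 0 := by
  rw [affineIndependent_iff_not_collinear_set] at hT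
  have hsin : 0 < Real.sin (∠ B A C) := sin_pos_of_not_collinear (by
    rwa [Set.insert_comm])
  have hAB : B - A ≠ 0 := sub_ne_zero.2 (ne₁₂_of_not_collinear hT).symm
  have hAC : C - A ≠ 0 := sub_ne_zero.2 (ne₁₃_of_not_collinear hT).symm
  rw [← abs_pos, abs_areaForm_eq_sin_angle_mul_norm_mul_norm]
  exact mul_pos hsin (mul_pos (norm_pos_iff.2 hAB) (norm_pos_iff.2 hAC))

theorem areaForm_sub_sub_rotate (A B C : V) :
    o.areaForm (B - A) (C - A) = o.areaForm (C - B) (A - B) := by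
  simp only [map_sub, LinearMap.sub_apply, areaForm_apply_self]
  rw [o.areaForm_swap C A, o.areaForm_swap C B]
  ring

theorem areaForm_sub_sub_of_eq_combination {A B C Ω : V} {a b c : ℝ} (habc : a + b + c = 1)
    (hΩ : Ω = a • A + b • B + c • C) :
    o.areaForm (Ω - A) (B - A) = -c * o.areaForm (B - A) (C - A) := by
  have : Ω - A = b • (B - A) + c • (C - A) := by
    obtain rfl : a = 1 - b - c := by linarith
    rw [hΩ]; simp only [sub_smul, one_smul, smul_sub]; abel
  rw [this]
  simp only [map_add, map_smul, LinearMap.add_apply, LinearMap.smul_apply, areaForm_apply_self,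
    smul_eq_mul]
  rw [o.areaForm_swap (C - A) (B - A)]
  ring

end Orientation

theorem AffineIndependent.exists_pos_eq_of_mem_interior_convexHull {V : Type*}
    [NormedAddCommGroup V] [NormedSpace ℝ V] {A B C Ω : V}
    (hT : AffineIndependent ℝ ![A, B, C]) (hΩ : Ω ∈ interior (convexHull ℝ {A, B, C})) :
    ∃ a b c : ℝ, 0 < a ∧ 0 < b ∧ 0 < c ∧ a + b + c = 1 ∧ Ω = a • A + b • B + c • C := by
  have hrange : Set.range ![A, B, C] = {A, B, C} := by
    rw [Matrix.range_cons, Matrix.range_cons, Matrix.range_cons_empty,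
      Set.singleton_union, Set.singleton_union]
  have htop : affineSpan ℝ (Set.range ![A, B, C]) = ⊤ := by
    rw [hrange]; exact affineSpan_eq_top_of_nonempty_interior ⟨Ω, hΩ⟩
  let T : AffineBasis (Fin 3) ℝ V := ⟨![A, B, C], hT, htop⟩
  have hT_coe : ⇑T = ![A, B, C] := rfl
  have hpos : ∀ i, 0 < T.coord i Ω := by
    rwa [← hrange, ← hT_coe, T.interior_convexHull] at hΩ
  refine ⟨T.coord 0 Ω, T.coord 1 Ω, T.coord 2 Ω, hpos 0, hpos 1, hpos 2, ?_, ?_⟩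
  · rw [← T.sum_coord_apply_eq_one Ω, Fin.sum_univ_three]
  · simpa [Fin.sum_univ_three, hT_coe] using (T.linear_combination_coord_eq_self Ω).symm

theorem inner_sub_sub_cyclic_sum_eq {V : Type*} [NormedAddCommGroup V] [InnerProductSpace ℝ V]
    (A B C Ω : V) :
    ⟪Ω - A, B - A⟫ + ⟪Ω - B, C - B⟫ + ⟪Ω - C, A - C⟫ =
      ⟪B - A, C - A⟫ + ⟪A - B, C - B⟫ + ⟪B - C, A - C⟫ := by
  simp only [inner_sub_left, inner_sub_right]
  linarith [real_inner_comm A B, real_inner_comm B C, real_inner_comm A C]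

theorem EuclideanGeometry.weighted_cot_sum_eq_cot_add_cot_add_cot {V : Type*}
    [NormedAddCommGroup V] [InnerProductSpace ℝ V] [Fact (finrank ℝ V = 2)] {A B C Ω : V}
    {a b c : ℝ} (hT : AffineIndependent ℝ ![A, B, C]) (ha : 0 < a) (hb : 0 < b) (hc : 0 < c)
    (habc : a + b + c = 1) (hΩ : Ω = a • A + b • B + c • C) :
    c * (Real.cos (∠ Ω A B) / Real.sin (∠ Ω A B)) +
      a * (Real.cos (∠ Ω B C) / Real.sin (∠ Ω B C)) +
      b * (Real.cos (∠ Ω C A) / Real.sin (∠ Ω C A)) =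
    Real.cos (∠ B A C) / Real.sin (∠ B A C) + Real.cos (∠ A B C) / Real.sin (∠ A B C) +
      Real.cos (∠ B C A) / Real.sin (∠ B C A) := by
  have : FiniteDimensional ℝ V := .of_fact_finrank_eq_two
  -- Any orientation will do: only absolute values of the area form survive.
  let o := (finBasisOfFinrankEq ℝ V (Fact.out : finrank ℝ V = 2)).orientation
  set Δ := o.areaForm (B - A) (C - A)
  have hΔ : Δ ≠ 0 := o.areaForm_sub_sub_ne_zero hT
  have hSA : o.areaForm (Ω - A) (B - A) = -c * Δ :=
    o.areaForm_sub_sub_of_eq_combination habc hΩ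
  have hSB : o.areaForm (Ω - B) (C - B) = -a * Δ := by
    rw [o.areaForm_sub_sub_of_eq_combination (a := b) (b := c) (c := a) (by linarith)
      (by rw [hΩ]; abel), ← o.areaForm_sub_sub_rotate]
  have hSC : o.areaForm (Ω - C) (A - C) = -b * Δ := by
    rw [o.areaForm_sub_sub_of_eq_combination (a := c) (b := a) (c := b) (by linarith)
      (by rw [hΩ]; abel), ← o.areaForm_sub_sub_rotate, ← o.areaForm_sub_sub_rotate]
  have hΔB : o.areaForm (A - B) (C - B) = -Δ := by
    rw [o.areaForm_swap, ← o.areaForm_sub_sub_rotate]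
  have hΔC : o.areaForm (B - C) (A - C) = -Δ := by
    rw [o.areaForm_swap, ← o.areaForm_sub_sub_rotate, ← o.areaForm_sub_sub_rotate]
  have hinner := inner_sub_sub_cyclic_sum_eq A B C Ω
  rw [o.inner_eq_cot_angle_mul_abs_areaForm (hSA ▸ mul_ne_zero (neg_ne_zero.2 hc.ne') hΔ),
    o.inner_eq_cot_angle_mul_abs_areaForm (hSB ▸ mul_ne_zero (neg_ne_zero.2 ha.ne') hΔ),
    o.inner_eq_cot_angle_mul_abs_areaForm (hSC ▸ mul_ne_zero (neg_ne_zero.2 hb.ne') hΔ),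
    o.inner_eq_cot_angle_mul_abs_areaForm hΔ,
    o.inner_eq_cot_angle_mul_abs_areaForm (hΔB ▸ neg_ne_zero.2 hΔ),
    o.inner_eq_cot_angle_mul_abs_areaForm (hΔC ▸ neg_ne_zero.2 hΔ),
    hSA, hSB, hSC, hΔB, hΔC] at hinner
  simp only [abs_mul, abs_neg, abs_of_pos ha, abs_of_pos hb, abs_of_pos hc] at hinner
  simp only [EuclideanGeometry.angle, vsub_eq_sub]
  refine mul_right_cancel₀ (abs_ne_zero.2 hΔ) ?_
  linear_combination hinner

/-- The Brocard angle formula: cot ω = cot A + cot B + cot C. -/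
theorem brocard_angle_cot
    (A B C Ω : EuclideanSpace ℝ (Fin 2)) (ω : ℝ)
    (hT : AffineIndependent ℝ ![A, B, C])
    (hΩ : Ω ∈ interior (convexHull ℝ {A, B, C}))
    (h₁ : ∠ Ω A B = ω) (h₂ : ∠ Ω B C = ω) (h₃ : ∠ Ω C A = ω) :
    Real.cos ω / Real.sin ω =
      Real.cos (∠ B A C) / Real.sin (∠ B A C) +
      Real.cos (∠ A B C) / Real.sin (∠ A B C) +
      Real.cos (∠ B C A) / Real.sin (∠ B C A) := by
  have : Fact (finrank ℝ (EuclideanSpace ℝ (Fin 2)) = 2) := ⟨finrank_euclideanSpace_fin⟩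
  obtain ⟨a, b, c, ha, hb, hc, habc, hΩ⟩ := hT.exists_pos_eq_of_mem_interior_convexHull hΩ
  rw [← weighted_cot_sum_eq_cot_add_cot_add_cot hT ha hb hc habc hΩ, h₁, h₂, h₃]
  linear_combination -(Real.cos ω / Real.sin ω) * habc
end

section
/- Distance between the incenter and the orthocenter. Let ABC be a nondegenerate triangle with a = dist B C, b = dist C A, c = dist A B and semiperimeter p = (a + b + c)/2; let O be its circumcenter, R its circumradius, H its orthocenter, I its incenter and r its inradius. Then dist I H ^ 2 = 4R² + 4Rr + 3r² − p². -/
open scoped RealInnerProductSpace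
open EuclideanGeometry Module

/-!
In the plane, Sylvester's relation `H = A + B + C - 2 • O` makes `(a + b + c) • (I - H)` a
combination of the three vectors `A - O`, `B - O`, `C - O` of length `R`, so `IH²` is a polynomial
in `R, a, b, c`. Both radii are tied to the sides through the area `S`:
`4 (a + b + c)² r² = 16 S² = a² b² c² / R²`, the second equality being the vanishing of the Gram
determinant of three vectors in the plane. Hence `2 (a + b + c) R r = a b c`, and the identity
becomes polynomial in `R, r, a, b, c`.
-/

/-- Sixteen times the squared area of a triangle with side lengths `a`, `b`, `c` (Heron). -/
def heron (a b c : ℝ) : ℝ :=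
  2 * a ^ 2 * b ^ 2 + 2 * b ^ 2 * c ^ 2 + 2 * c ^ 2 * a ^ 2 - a ^ 4 - b ^ 4 - c ^ 4

section

variable {V : Type*} [NormedAddCommGroup V] [InnerProductSpace ℝ V]

theorem inner_sub_sub_of_dist_eq {O A B : V} {R : ℝ} (hA : dist O A = R) (hB : dist O B = R) :
    ⟪A - O, B - O⟫ = R ^ 2 - dist A B ^ 2 / 2 := by
  rw [dist_comm, dist_eq_norm] at hA hB
  rw [dist_eq_norm, show A - B = (A - O) - (B - O) by abel, norm_sub_sq_real, hA, hB]
  ring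

theorem norm_smul_add_smul_add_smul_sq (x y z : ℝ) (u v w : V) :
    ‖x • u + y • v + z • w‖ ^ 2 =
      (x + y + z) * (x * ‖u‖ ^ 2 + y * ‖v‖ ^ 2 + z * ‖w‖ ^ 2) -
        (x * y * ‖u - v‖ ^ 2 + y * z * ‖v - w‖ ^ 2 + z * x * ‖w - u‖ ^ 2) := by
  rw [norm_add_sq_real, norm_add_sq_real, norm_sub_sq_real, norm_sub_sq_real, norm_sub_sq_real,
    norm_smul, norm_smul, norm_smul, inner_add_left, real_inner_smul_left, real_inner_smul_left,
    real_inner_smul_left, real_inner_smul_right, real_inner_smul_right, real_inner_smul_right,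
    real_inner_comm u w, Real.norm_eq_abs, Real.norm_eq_abs, Real.norm_eq_abs, mul_pow, mul_pow,
    mul_pow, sq_abs, sq_abs, sq_abs]
  ring

theorem infDist_affineSpan_pair_sq_mul_norm_sq (X P Q : V) :
    Metric.infDist X line[ℝ, P, Q] ^ 2 * ‖Q - P‖ ^ 2 =
      ‖X - P‖ ^ 2 * ‖Q - P‖ ^ 2 - ⟪X - P, Q - P⟫ ^ 2 := by
  set F : V := (orthogonalProjection line[ℝ, P, Q] X : V)
  have hP : P ∈ line[ℝ, P, Q] := left_mem_affineSpan_pair ℝ P Q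
  have hQP : Q - P ∈ line[ℝ, P, Q].direction :=
    AffineSubspace.vsub_mem_direction (right_mem_affineSpan_pair ℝ P Q) hP
  obtain ⟨t, hF⟩ : ∃ t : ℝ, t • (Q - P) = F - P := by
    have hFP : F - P ∈ line[ℝ, P, Q].direction := orthogonalProjection_vsub_mem_direction X hP
    rwa [direction_affineSpan, vectorSpan_pair_rev, Submodule.mem_span_singleton] at hFP
  have hperp : ⟪Q - P, X - F⟫ = 0 :=
    Submodule.inner_right_of_mem_orthogonal hQP
      (vsub_orthogonalProjection_mem_direction_orthogonal _ X)
  have hPyth := dist_sq_eq_dist_orthogonalProjection_sq_add_dist_orthogonalProjection_sq X hP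
  have hinner : ⟪X - P, Q - P⟫ = t * ‖Q - P‖ ^ 2 := by
    rw [show X - P = (X - F) + t • (Q - P) by rw [hF]; abel, inner_add_left, real_inner_comm,
      hperp, real_inner_smul_left, real_inner_self_eq_norm_sq, zero_add]
  rw [← dist_orthogonalProjection_eq_infDist, hinner, dist_eq_norm]
  rw [dist_eq_norm, dist_eq_norm, dist_eq_norm, ← norm_neg (P - F),
    show -(P - F) = t • (Q - P) by rw [hF]; abel, norm_smul, Real.norm_eq_abs, norm_sub_rev P X]
    at hPyth
  linear_combination (-‖Q - P‖ ^ 2) * hPyth - ‖Q - P‖ ^ 4 * sq_abs t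

theorem circumradius_sq_mul_heron (hV : finrank ℝ V = 2) {A B C O : V} {R : ℝ}
    (hA : dist O A = R) (hB : dist O B = R) (hC : dist O C = R) :
    R ^ 2 * heron (dist B C) (dist C A) (dist A B) =
      dist B C ^ 2 * dist C A ^ 2 * dist A B ^ 2 := by
  have : FiniteDimensional ℝ V := Module.finite_of_finrank_eq_succ hV
  have hdep : ¬ LinearIndependent ℝ ![A - O, B - O, C - O] := fun h => by
    simpa [hV] using h.fintype_card_le_finrank
  have hdet := mt Matrix.det_gram_ne_zero_iff_linearIndependent.mp hdep
  rw [not_not, Matrix.det_fin_three] at hdet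
  have hself : ∀ {X}, dist O X = R → ⟪X - O, X - O⟫ = R ^ 2 := fun h => by
    simpa using inner_sub_sub_of_dist_eq h h
  simp only [Matrix.gram_apply, Matrix.cons_val_zero, Matrix.cons_val_one, Matrix.cons_val_two,
    Matrix.head_cons, Matrix.tail_cons, hself hA, hself hB, hself hC,
    inner_sub_sub_of_dist_eq hA hB, inner_sub_sub_of_dist_eq hB hC, inner_sub_sub_of_dist_eq hC hA,
    inner_sub_sub_of_dist_eq hB hA, inner_sub_sub_of_dist_eq hC hB, inner_sub_sub_of_dist_eq hA hC,
    dist_comm B A, dist_comm C B, dist_comm A C] at hdet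
  unfold heron
  linear_combination 4 * hdet

theorem eq_zero_of_inner_eq_zero_of_affineIndependent (hV : finrank ℝ V = 2) {A B C D : V}
    (hT : AffineIndependent ℝ ![A, B, C]) (h₁ : ⟪D, B - C⟫ = 0) (h₂ : ⟪D, C - A⟫ = 0) : D = 0 := by
  have : FiniteDimensional ℝ V := Module.finite_of_finrank_eq_succ hV
  have htop : vectorSpan ℝ (Set.range ![A, B, C]) = ⊤ := by
    rw [← direction_affineSpan,
      hT.affineSpan_eq_top_iff_card_eq_finrank_add_one.mpr (by simp [hV]),
      AffineSubspace.direction_top]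
  have hperp : vectorSpan ℝ (Set.range ![A, B, C]) ≤ (ℝ ∙ D)ᗮ := by
    rw [vectorSpan_range_eq_span_range_vsub_right ℝ _ 2, Submodule.span_le]
    rintro _ ⟨i, rfl⟩
    rw [SetLike.mem_coe, Submodule.mem_orthogonal_singleton_iff_inner_right]
    fin_cases i
    · show ⟪D, A - C⟫ = 0
      rw [← neg_sub, inner_neg_right, h₂, neg_zero]
    · exact h₁
    · simp
  have hD : D ∈ (ℝ ∙ D)ᗮ := hperp (htop ▸ Submodule.mem_top)
  exact inner_self_eq_zero.mp (Submodule.mem_orthogonal_singleton_iff_inner_right.mp hD)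

theorem orthocenter_eq_add_add_sub_two_smul_circumcenter (hV : finrank ℝ V = 2) {A B C O H : V}
    {R : ℝ} (hT : AffineIndependent ℝ ![A, B, C])
    (hA : dist O A = R) (hB : dist O B = R) (hC : dist O C = R)
    (hH₁ : ⟪H - A, B - C⟫ = 0) (hH₂ : ⟪H - B, C - A⟫ = 0) :
    H = A + B + C - (2 : ℝ) • O := by
  rw [dist_comm, dist_eq_norm] at hA hB hC
  have hBC := (real_inner_add_sub_eq_zero_iff (B - O) (C - O)).mpr (hB.trans hC.symm)
  have hCA := (real_inner_add_sub_eq_zero_iff (C - O) (A - O)).mpr (hC.trans hA.symm)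
  rw [sub_sub_sub_cancel_right] at hBC hCA
  refine (sub_eq_zero.mp (eq_zero_of_inner_eq_zero_of_affineIndependent hV hT ?_ ?_)).symm
  · rw [show A + B + C - (2 : ℝ) • O - H = ((B - O) + (C - O)) - (H - A) by module,
      inner_sub_left, hBC, hH₁, sub_zero]
  · rw [show A + B + C - (2 : ℝ) • O - H = ((C - O) + (A - O)) - (H - B) by module,
      inner_sub_left, hCA, hH₂, sub_zero]

theorem infDist_incenter_sq_mul_perimeter_sq {A B C I : V} (hBC : B ≠ C)
    (hI : I = (dist B C / (dist B C + dist C A + dist A B)) • A +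
      (dist C A / (dist B C + dist C A + dist A B)) • B +
      (dist A B / (dist B C + dist C A + dist A B)) • C) :
    Metric.infDist I line[ℝ, B, C] ^ 2 * (4 * (dist B C + dist C A + dist A B) ^ 2) =
      heron (dist B C) (dist C A) (dist A B) := by
  set a := dist B C
  set b := dist C A
  set c := dist A B
  have ha : 0 < a := dist_pos.mpr hBC
  have hs : a + b + c ≠ 0 := by positivity
  have hIB : (a + b + c) • (I - B) = a • (A - B) + c • (C - B) := by
    rw [hI]
    match_scalars <;> field_simp
    ring
  have hCB : ‖C - B‖ = a := by rw [← dist_eq_norm, dist_comm]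
  have hAB : ‖A - B‖ = c := by rw [← dist_eq_norm]
  have hg : ⟪A - B, C - B⟫ = (c ^ 2 + a ^ 2 - b ^ 2) / 2 := by
    have := norm_sub_sq_real (A - B) (C - B)
    rw [show A - B - (C - B) = -(C - A) by abel, norm_neg, ← dist_eq_norm, hAB, hCB] at this
    linarith
  have hline := infDist_affineSpan_pair_sq_mul_norm_sq I B C
  rw [hCB] at hline
  have hnorm := congrArg (fun x => ⟪x, x⟫) hIB
  have hproj := congrArg (fun x => ⟪x, C - B⟫) hIB
  simp only [inner_add_left, inner_add_right, real_inner_smul_left, real_inner_smul_right,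
    real_inner_comm (A - B) (C - B), hg] at hnorm hproj
  simp only [real_inner_self_eq_norm_sq, hAB, hCB] at hnorm hproj
  refine mul_right_cancel₀ (pow_ne_zero 2 ha.ne') ?_
  unfold heron
  linear_combination 4 * (a + b + c) ^ 2 * hline + 4 * a ^ 2 * hnorm -
    4 * ((a + b + c) * ⟪I - B, C - B⟫ + a * ((c ^ 2 + a ^ 2 - b ^ 2) / 2) + c * a ^ 2) * hproj

theorem circumradius_mul_infDist_incenter_mul_perimeter (hV : finrank ℝ V = 2) {A B C O I : V}
    {R : ℝ} (hBC : B ≠ C) (hA : dist O A = R) (hB : dist O B = R) (hC : dist O C = R)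
    (hI : I = (dist B C / (dist B C + dist C A + dist A B)) • A +
      (dist C A / (dist B C + dist C A + dist A B)) • B +
      (dist A B / (dist B C + dist C A + dist A B)) • C) :
    R * Metric.infDist I line[ℝ, B, C] * (2 * (dist B C + dist C A + dist A B)) =
      dist B C * dist C A * dist A B := by
  have hR : 0 ≤ R := hA ▸ dist_nonneg
  refine (sq_eq_sq₀ (mul_nonneg (mul_nonneg hR Metric.infDist_nonneg) (by positivity))
    (by positivity)).mp ?_
  linear_combination R ^ 2 * infDist_incenter_sq_mul_perimeter_sq hBC hI +
    circumradius_sq_mul_heron hV hA hB hC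

theorem perimeter_sq_mul_dist_incenter_orthocenter_sq {A B C O H I : V} {R : ℝ} (hBC : B ≠ C)
    (hA : dist O A = R) (hB : dist O B = R) (hC : dist O C = R)
    (hH : H = A + B + C - (2 : ℝ) • O)
    (hI : I = (dist B C / (dist B C + dist C A + dist A B)) • A +
      (dist C A / (dist B C + dist C A + dist A B)) • B +
      (dist A B / (dist B C + dist C A + dist A B)) • C) :
    (dist B C + dist C A + dist A B) ^ 2 * dist I H ^ 2 =
      4 * (dist B C + dist C A + dist A B) ^ 2 * R ^ 2 -
        ((dist C A + dist A B) * (dist A B + dist B C) * dist A B ^ 2 +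
          (dist A B + dist B C) * (dist B C + dist C A) * dist B C ^ 2 +
          (dist B C + dist C A) * (dist C A + dist A B) * dist C A ^ 2) := by
  set a := dist B C
  set b := dist C A
  set c := dist A B
  have hs : a + b + c ≠ 0 := by have := dist_pos.mpr hBC; positivity
  have hvec : (a + b + c) • (I - H) =
      (-(b + c)) • (A - O) + (-(c + a)) • (B - O) + (-(a + b)) • (C - O) := by
    rw [hI, hH]
    match_scalars <;> (field_simp; ring)
  have hnorm := congrArg (‖·‖ ^ 2) hvec
  simp only [norm_smul_add_smul_add_smul_sq, sub_sub_sub_cancel_right, ← dist_eq_norm,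
    dist_comm _ O, hA, hB, hC, norm_smul, mul_pow, Real.norm_eq_abs, sq_abs] at hnorm
  linear_combination hnorm

end

theorem dist_incenter_orthocenter_sq_general
    (A B C O H I : EuclideanSpace ℝ (Fin 2)) (R r p : ℝ)
    (hT : AffineIndependent ℝ ![A, B, C])
    (hp : p = (dist B C + dist C A + dist A B) / 2)
    (hO : dist O A = R ∧ dist O B = R ∧ dist O C = R)
    (hH₁ : (inner ℝ (H - A) (B - C) : ℝ) = 0)
    (hH₂ : (inner ℝ (H - B) (C - A) : ℝ) = 0)
    (hI : I = (dist B C / (dist B C + dist C A + dist A B)) • A +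
      (dist C A / (dist B C + dist C A + dist A B)) • B +
      (dist A B / (dist B C + dist C A + dist A B)) • C)
    (hr : r = Metric.infDist I (affineSpan ℝ {B, C} : Set (EuclideanSpace ℝ (Fin 2)))) :
    dist I H ^ 2 = 4 * R ^ 2 + 4 * R * r + 3 * r ^ 2 - p ^ 2 := by
  obtain ⟨hOA, hOB, hOC⟩ := hO
  have hV : finrank ℝ (EuclideanSpace ℝ (Fin 2)) = 2 := finrank_euclideanSpace_fin
  have hBC : B ≠ C := fun h => hT.injective.ne (show (1 : Fin 3) ≠ 2 by decide) (by simp [h])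
  have hH := orthocenter_eq_add_add_sub_two_smul_circumcenter hV hT hOA hOB hOC hH₁ hH₂
  have hIH := perimeter_sq_mul_dist_incenter_orthocenter_sq hBC hOA hOB hOC hH hI
  have hr2 := infDist_incenter_sq_mul_perimeter_sq hBC hI
  have hRr := circumradius_mul_infDist_incenter_mul_perimeter hV hBC hOA hOB hOC hI
  rw [← hr] at hr2 hRr
  unfold heron at hr2
  set s := dist B C + dist C A + dist A B
  have hs : s ≠ 0 := by have := dist_pos.mpr hBC; positivity
  refine mul_left_cancel₀ (pow_ne_zero 2 hs) ?_
  linear_combination hIH - 2 * s * hRr - 3 / 4 * hr2 + (p + s / 2) * s ^ 2 * hp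

/-- Distance between the incenter and the orthocenter:
`IH² = 4R² + 4Rr + 3r² − p²`. -/
theorem dist_incenter_orthocenter_sq
    (A B C O H I : EuclideanSpace ℝ (Fin 2)) (R r p : ℝ)
    (hT : AffineIndependent ℝ ![A, B, C])
    (hp : p = (dist B C + dist C A + dist A B) / 2)
    (hO : dist O A = R ∧ dist O B = R ∧ dist O C = R)
    (hH₁ : (inner ℝ (H - A) (B - C) : ℝ) = 0)
    (hH₂ : (inner ℝ (H - B) (C - A) : ℝ) = 0)
    (hH₃ : (inner ℝ (H - C) (A - B) : ℝ) = 0)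
    (hI : I = (dist B C / (dist B C + dist C A + dist A B)) • A +
      (dist C A / (dist B C + dist C A + dist A B)) • B +
      (dist A B / (dist B C + dist C A + dist A B)) • C)
    (hr : r = Metric.infDist I (affineSpan ℝ {B, C} : Set (EuclideanSpace ℝ (Fin 2)))) :
    dist I H ^ 2 = 4 * R ^ 2 + 4 * R * r + 3 * r ^ 2 - p ^ 2 :=
  dist_incenter_orthocenter_sq_general A B C O H I R r p hT hp hO hH₁ hH₂ hI hr
end
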